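/- arXiv:2311.04295 — 4 statements merged into one kernel-verified Lean document; each statement's English description precedes it below -/
import Mathlib

section
/- Let $A,B,C$ be mutually independent random variables, and let $(A',B',C')$ be an independent copy of $(A,B,C)$. Then for any measurable function $f$ taking real values, $\mathbb{E}[|f(A,B,C) - f(A,B,C')|] \le \mathbb{E}[|f(A,B,C) - f(A,B',C')|]$. -/
open MeasureTheory
open scoped ENNReal NNReal

lemma amgm (x y : ℝ≥0∞) : x * y + x * y ≤ x * x + y * y := by
  rcases eq_or_ne x ∞ with rfl | hx
  · rcases eq_or_ne y 0 with rfl | hy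
    · simp
    · have : (∞ : ℝ≥0∞) * ∞ = ∞ := by simp
      simp [this]
  rcases eq_or_ne y ∞ with rfl | hy
  · rcases eq_or_ne x 0 with rfl | hx0
    · simp
    · have : (∞ : ℝ≥0∞) * ∞ = ∞ := by simp
      simp [this]
  lift x to NNReal using hx
  lift y to NNReal using hy
  rw [← ENNReal.coe_mul, ← ENNReal.coe_mul, ← ENNReal.coe_mul, ← ENNReal.coe_add, ← ENNReal.coe_add,
    ENNReal.coe_le_coe, ← NNReal.coe_le_coe]
  push_cast
  nlinarith [sq_nonneg ((x : ℝ) - y)]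

lemma layer (x y : ℝ) :
    ENNReal.ofReal |x - y| = ∫⁻ t : ℝ, (if (t < x ↔ t < y) then 0 else 1) := by
  have hset : (fun t : ℝ => (if (t < x ↔ t < y) then (0 : ℝ≥0∞) else 1))
      = (Set.Ico (min x y) (max x y)).indicator (fun _ => 1) := by
    funext t
    have hmem : t ∈ Set.Ico (min x y) (max x y) ↔ ¬ (t < x ↔ t < y) := by
      simp only [Set.mem_Ico, min_le_iff, lt_max_iff, not_le]
      constructor
      · rintro ⟨h1 | h1, h2 | h2⟩ h <;> first
          | (exact absurd h1 (not_le.2 (h.2 h2)))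
          | (exact absurd h1 (not_le.2 (h.1 h2)))
          | (exact lt_irrefl t (lt_of_lt_of_le h2 h1))
      · intro h
        by_cases h1 : t < x <;> by_cases h2 : t < y
        · exact absurd (iff_of_true h1 h2) h
        · exact ⟨Or.inr (not_lt.1 h2), Or.inl h1⟩
        · exact ⟨Or.inl (not_lt.1 h1), Or.inr h2⟩
        · exact absurd (iff_of_false h1 h2) h
    by_cases h : t < x ↔ t < y
    · simp [h, Set.indicator_of_notMem (hmem.not.2 (by simpa using h))]
    · simp [h, Set.indicator_of_mem (hmem.2 h)]
  rw [hset, lintegral_indicator_const measurableSet_Ico, Real.volume_Ico, one_mul,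
    max_sub_min_eq_abs, abs_sub_comm]

noncomputable def eind (x t : ℝ) : ℝ≥0∞ := if t < x then 1 else 0

lemma eind_le_one (x t : ℝ) : eind x t ≤ 1 := by unfold eind; split <;> simp

noncomputable def Wf (x y t : ℝ) : ℝ≥0∞ :=
  eind x t * (1 - eind y t) + (1 - eind x t) * eind y t

lemma layer2 (x y : ℝ) : ENNReal.ofReal |x - y| = ∫⁻ t : ℝ, Wf x y t := by
  rw [layer]
  congr 1
  funext t
  unfold Wf eind
  by_cases h1 : t < x <;> by_cases h2 : t < y <;> simp [h1, h2]

lemma hWf_meas : Measurable fun p : ℝ × ℝ × ℝ => Wf p.1 p.2.1 p.2.2 := by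
  unfold Wf eind
  have h1 : Measurable fun p : ℝ × ℝ × ℝ => (if p.2.2 < p.1 then (1 : ℝ≥0∞) else 0) :=
    Measurable.ite (measurableSet_lt measurable_snd.snd measurable_fst)
      measurable_const measurable_const
  have h2 : Measurable fun p : ℝ × ℝ × ℝ => (if p.2.2 < p.2.1 then (1 : ℝ≥0∞) else 0) :=
    Measurable.ite (measurableSet_lt measurable_snd.snd measurable_snd.fst)
      measurable_const measurable_const
  exact (h1.mul (measurable_const.sub h2)).add ((measurable_const.sub h1).mul h2)

lemma keyt {β γ : Type*} [MeasurableSpace β] [MeasurableSpace γ]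
    (νβ : Measure β) (νγ : Measure γ) [IsProbabilityMeasure νβ] [IsProbabilityMeasure νγ]
    (I : β → γ → ℝ≥0∞) (hI : Measurable fun p : β × γ => I p.1 p.2)
    (hI1 : ∀ b c, I b c ≤ 1) :
    ∫⁻ b, ∫⁻ c, ∫⁻ c', (I b c * (1 - I b c') + (1 - I b c) * I b c') ∂νγ ∂νγ ∂νβ ≤
    ∫⁻ b, ∫⁻ c, ∫⁻ b', ∫⁻ c', (I b c * (1 - I b' c') + (1 - I b c) * I b' c') ∂νγ ∂νβ ∂νγ ∂νβ := by
  have hIb : ∀ b, Measurable (I b) := fun b => hI.comp measurable_prodMk_left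
  set F : β → ℝ≥0∞ := fun b => ∫⁻ c, I b c ∂νγ with hFdef
  have hF : Measurable F := Measurable.lintegral_prod_right hI
  have hF1 : ∀ b, F b ≤ 1 := by
    intro b
    calc F b ≤ ∫⁻ _, 1 ∂νγ := lintegral_mono fun c => hI1 b c
    _ = 1 := by simp
  set m : ℝ≥0∞ := ∫⁻ b, F b ∂νβ with hmdef
  have hm1 : m ≤ 1 := by
    calc m ≤ ∫⁻ _, 1 ∂νβ := lintegral_mono fun b => hF1 b
    _ = 1 := by simp
  have hFne : ∀ b, F b ≠ ∞ := fun b => ((hF1 b).trans_lt ENNReal.one_lt_top).ne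
  have hmne : m ≠ ∞ := (hm1.trans_lt ENNReal.one_lt_top).ne
  have hcomp : ∀ b, ∫⁻ c, (1 - I b c) ∂νγ = 1 - F b := by
    intro b
    have := lintegral_sub (hIb b) ((hF1 b).trans_lt ENNReal.one_lt_top).ne
      (Filter.Eventually.of_forall fun c => hI1 b c)
    simpa using this
  have hcompb : ∫⁻ b, (1 - F b) ∂νβ = 1 - m := by
    have := lintegral_sub hF hmne (Filter.Eventually.of_forall fun b => hF1 b)
    simpa using this
  -- inner evaluation over c'
  have e1 : ∀ x b, ∫⁻ c', (x * (1 - I b c') + (1 - x) * I b c') ∂νγ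
      = x * (1 - F b) + (1 - x) * F b := by
    intro x b
    rw [lintegral_add_left (f := fun c' => x * (1 - I b c')) (measurable_const.mul (measurable_const.sub (hIb b))),
      lintegral_const_mul _ (f := fun c' => 1 - I b c') (measurable_const.sub (hIb b)), lintegral_const_mul _ (hIb b), hcomp]
  have e2 : ∀ (u v : ℝ≥0∞) b, ∫⁻ c, (I b c * u + (1 - I b c) * v) ∂νγ
      = F b * u + (1 - F b) * v := by
    intro u v b
    rw [lintegral_add_left (f := fun c => I b c * u) ((hIb b).mul measurable_const), lintegral_mul_const _ (hIb b),
      lintegral_mul_const _ (f := fun c => 1 - I b c) (measurable_const.sub (hIb b)), hcomp]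
  have e4 : ∀ (u v : ℝ≥0∞), ∫⁻ b, (F b * u + (1 - F b) * v) ∂νβ = m * u + (1 - m) * v := by
    intro u v
    rw [lintegral_add_left (f := fun b => F b * u) (hF.mul measurable_const), lintegral_mul_const _ hF,
      lintegral_mul_const _ (f := fun b => 1 - F b) (measurable_const.sub hF), hcompb]
  have e3 : ∀ x, ∫⁻ b', (x * (1 - F b') + (1 - x) * F b') ∂νβ
      = x * (1 - m) + (1 - x) * m := by
    intro x
    rw [lintegral_add_left (f := fun b' => x * (1 - F b')) (measurable_const.mul (measurable_const.sub hF)),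
      lintegral_const_mul _ (f := fun b' => 1 - F b') (measurable_const.sub hF), lintegral_const_mul _ hF, hcompb]
  simp only [e1, e3, e2]
  rw [e4]
  -- now goal: ∫⁻ b, (F b * (1 - F b) + (1 - F b) * F b) ∂νβ ≤ m * (1 - m) + (1 - m) * m
  set J : ℝ≥0∞ := ∫⁻ b, F b * F b ∂νβ with hJdef
  have hJ1 : J ≤ 1 := by
    calc J ≤ ∫⁻ _, 1 ∂νβ := lintegral_mono fun b => mul_le_one' (hF1 b) (hF1 b)
    _ = 1 := by simp
  have hJne : J ≠ ∞ := (hJ1.trans_lt ENNReal.one_lt_top).ne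
  have hFF : Measurable fun b => F b * F b := hF.mul hF
  have hsub1 : ∀ b, F b * (1 - F b) = F b - F b * F b := fun b => by
    rw [ENNReal.mul_sub fun _ _ => hFne b, mul_one]
  have hsub2 : ∀ b, (1 - F b) * F b = F b - F b * F b := fun b => by
    rw [ENNReal.sub_mul fun _ _ => hFne b, one_mul]
  have hFFle : ∀ b, F b * F b ≤ F b := fun b => by
    calc F b * F b ≤ F b * 1 := mul_le_mul_right (hF1 b) _
    _ = F b := mul_one _
  have hsubint : ∫⁻ b, (F b - F b * F b) ∂νβ = m - J :=
    lintegral_sub hFF hJne (Filter.Eventually.of_forall hFFle)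
  have hLHS : ∫⁻ b, (F b * (1 - F b) + (1 - F b) * F b) ∂νβ = (m - J) + (m - J) := by
    simp only [hsub1, hsub2]
    rw [lintegral_add_left (f := fun b => F b - F b * F b) (hF.sub hFF), hsubint]
  have hRHS : m * (1 - m) + (1 - m) * m = (m - m * m) + (m - m * m) := by
    rw [ENNReal.mul_sub fun _ _ => hmne, mul_one, ENNReal.sub_mul fun _ _ => hmne, one_mul]
  rw [hLHS, hRHS]
  -- Cauchy-Schwarz: m * m ≤ J
  have hcs : m * m ≤ J := by
    have expand : m * m = ∫⁻ b, ∫⁻ b', F b * F b' ∂νβ ∂νβ := by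
      simp only [lintegral_const_mul _ hF]
      rw [lintegral_mul_const _ hF]
    have hdouble : m * m + m * m ≤ J + J := by
      rw [expand]
      have step1 : (∫⁻ b, ∫⁻ b', F b * F b' ∂νβ ∂νβ) + (∫⁻ b, ∫⁻ b', F b * F b' ∂νβ ∂νβ)
          = ∫⁻ b, ∫⁻ b', (F b * F b' + F b * F b') ∂νβ ∂νβ := by
        rw [← lintegral_add_left (Measurable.lintegral_prod_right
          (f := fun b b' => F b * F b') ((hF.comp measurable_fst).mul (hF.comp measurable_snd)))]
        congr 1
        funext b
        rw [← lintegral_add_left (f := fun b' => F b * F b') (measurable_const.mul hF)]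
      rw [step1]
      calc ∫⁻ b, ∫⁻ b', (F b * F b' + F b * F b') ∂νβ ∂νβ
          ≤ ∫⁻ b, ∫⁻ b', (F b * F b + F b' * F b') ∂νβ ∂νβ :=
            lintegral_mono fun b => lintegral_mono fun b' => amgm _ _
        _ = J + J := by
            have : ∀ b, ∫⁻ b', (F b * F b + F b' * F b') ∂νβ = F b * F b + J := by
              intro b
              rw [lintegral_add_left measurable_const, lintegral_const]
              simp [hJdef]
            simp only [this]
            rw [lintegral_add_left hFF, lintegral_const]
            simp [hJdef]
    rw [← two_mul, ← two_mul] at hdouble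
    exact (ENNReal.mul_le_mul_iff_right two_ne_zero ENNReal.ofNat_ne_top).1 hdouble
  exact add_le_add (tsub_le_tsub_left hcs m) (tsub_le_tsub_left hcs m)

lemma core {β γ : Type*} [MeasurableSpace β] [MeasurableSpace γ]
    (νβ : Measure β) (νγ : Measure γ) [IsProbabilityMeasure νβ] [IsProbabilityMeasure νγ]
    (g : β → γ → ℝ) (hg : Measurable fun p : β × γ => g p.1 p.2) :
    ∫⁻ b, ∫⁻ c, ∫⁻ c', ENNReal.ofReal |g b c - g b c'| ∂νγ ∂νγ ∂νβ ≤
    ∫⁻ b, ∫⁻ c, ∫⁻ b', ∫⁻ c', ENNReal.ofReal |g b c - g b' c'| ∂νγ ∂νβ ∂νγ ∂νβ := by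
  have hgb : ∀ b, Measurable (g b) := fun b => hg.comp measurable_prodMk_left
  have swapL1 : ∀ b c, ∫⁻ c', ∫⁻ t, Wf (g b c) (g b c') t ∂(volume) ∂νγ
      = ∫⁻ t, ∫⁻ c', Wf (g b c) (g b c') t ∂νγ ∂(volume) := by
    intro b c
    exact lintegral_lintegral_swap (Measurable.aemeasurable
      (hWf_meas.comp (measurable_const.prodMk
        (((hgb b).comp measurable_fst).prodMk measurable_snd))))
  have swapL2 : ∀ b, ∫⁻ c, ∫⁻ t, ∫⁻ c', Wf (g b c) (g b c') t ∂νγ ∂(volume) ∂νγ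
      = ∫⁻ t, ∫⁻ c, ∫⁻ c', Wf (g b c) (g b c') t ∂νγ ∂νγ ∂(volume) := by
    intro b
    exact lintegral_lintegral_swap (Measurable.aemeasurable
      (Measurable.lintegral_prod_right (f := fun (z : γ × ℝ) c' => Wf (g b z.1) (g b c') z.2)
        (hWf_meas.comp (((hgb b).comp measurable_fst.fst).prodMk
          ((((hgb b).comp measurable_snd)).prodMk measurable_fst.snd)))))
  have swapL3 : ∫⁻ b, ∫⁻ t, ∫⁻ c, ∫⁻ c', Wf (g b c) (g b c') t ∂νγ ∂νγ ∂(volume) ∂νβ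
      = ∫⁻ t, ∫⁻ b, ∫⁻ c, ∫⁻ c', Wf (g b c) (g b c') t ∂νγ ∂νγ ∂νβ ∂(volume) := by
    refine lintegral_lintegral_swap (Measurable.aemeasurable ?_)
    refine Measurable.lintegral_prod_right
      (f := fun (z : β × ℝ) c => ∫⁻ c', Wf (g z.1 c) (g z.1 c') z.2 ∂νγ) ?_
    refine Measurable.lintegral_prod_right
      (f := fun (w : (β × ℝ) × γ) c' => Wf (g w.1.1 w.2) (g w.1.1 c') w.1.2) ?_
    exact hWf_meas.comp ((hg.comp (measurable_fst.fst.fst.prodMk measurable_fst.snd)).prodMk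
      ((hg.comp (measurable_fst.fst.fst.prodMk measurable_snd)).prodMk measurable_fst.fst.snd))
  have swapR1 : ∀ b c b', ∫⁻ c', ∫⁻ t, Wf (g b c) (g b' c') t ∂(volume) ∂νγ
      = ∫⁻ t, ∫⁻ c', Wf (g b c) (g b' c') t ∂νγ ∂(volume) := by
    intro b c b'
    exact lintegral_lintegral_swap (Measurable.aemeasurable
      (hWf_meas.comp (measurable_const.prodMk
        (((hgb b').comp measurable_fst).prodMk measurable_snd))))
  have swapR2 : ∀ b c, ∫⁻ b', ∫⁻ t, ∫⁻ c', Wf (g b c) (g b' c') t ∂νγ ∂(volume) ∂νβ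
      = ∫⁻ t, ∫⁻ b', ∫⁻ c', Wf (g b c) (g b' c') t ∂νγ ∂νβ ∂(volume) := by
    intro b c
    refine lintegral_lintegral_swap (Measurable.aemeasurable ?_)
    refine Measurable.lintegral_prod_right
      (f := fun (z : β × ℝ) c' => Wf (g b c) (g z.1 c') z.2) ?_
    exact hWf_meas.comp (measurable_const.prodMk
      ((hg.comp (measurable_fst.fst.prodMk measurable_snd)).prodMk measurable_fst.snd))
  have swapR3 : ∀ b, ∫⁻ c, ∫⁻ t, ∫⁻ b', ∫⁻ c', Wf (g b c) (g b' c') t ∂νγ ∂νβ ∂(volume) ∂νγ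
      = ∫⁻ t, ∫⁻ c, ∫⁻ b', ∫⁻ c', Wf (g b c) (g b' c') t ∂νγ ∂νβ ∂νγ ∂(volume) := by
    intro b
    refine lintegral_lintegral_swap (Measurable.aemeasurable ?_)
    refine Measurable.lintegral_prod_right
      (f := fun (z : γ × ℝ) b' => ∫⁻ c', Wf (g b z.1) (g b' c') z.2 ∂νγ) ?_
    refine Measurable.lintegral_prod_right
      (f := fun (w : (γ × ℝ) × β) c' => Wf (g b w.1.1) (g w.2 c') w.1.2) ?_
    exact hWf_meas.comp (((hgb b).comp measurable_fst.fst.fst).prodMk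
      ((hg.comp (measurable_fst.snd.prodMk measurable_snd)).prodMk measurable_fst.fst.snd))
  have swapR4 : ∫⁻ b, ∫⁻ t, ∫⁻ c, ∫⁻ b', ∫⁻ c', Wf (g b c) (g b' c') t ∂νγ ∂νβ ∂νγ ∂(volume) ∂νβ
      = ∫⁻ t, ∫⁻ b, ∫⁻ c, ∫⁻ b', ∫⁻ c', Wf (g b c) (g b' c') t ∂νγ ∂νβ ∂νγ ∂νβ ∂(volume) := by
    refine lintegral_lintegral_swap (Measurable.aemeasurable ?_)
    refine Measurable.lintegral_prod_right
      (f := fun (z : β × ℝ) c => ∫⁻ b', ∫⁻ c', Wf (g z.1 c) (g b' c') z.2 ∂νγ ∂νβ) ?_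
    refine Measurable.lintegral_prod_right
      (f := fun (w : (β × ℝ) × γ) b' => ∫⁻ c', Wf (g w.1.1 w.2) (g b' c') w.1.2 ∂νγ) ?_
    refine Measurable.lintegral_prod_right
      (f := fun (v : ((β × ℝ) × γ) × β) c' => Wf (g v.1.1.1 v.1.2) (g v.2 c') v.1.1.2) ?_
    exact hWf_meas.comp
      ((hg.comp (measurable_fst.fst.fst.fst.prodMk measurable_fst.fst.snd)).prodMk
        ((hg.comp (measurable_fst.snd.prodMk measurable_snd)).prodMk
          measurable_fst.fst.fst.snd))
  simp only [layer2]
  rw [show (∫⁻ b, ∫⁻ c, ∫⁻ c', ∫⁻ t, Wf (g b c) (g b c') t ∂(volume) ∂νγ ∂νγ ∂νβ)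
      = ∫⁻ t, ∫⁻ b, ∫⁻ c, ∫⁻ c', Wf (g b c) (g b c') t ∂νγ ∂νγ ∂νβ ∂(volume) by
    simp only [swapL1, swapL2]; exact swapL3]
  rw [show (∫⁻ b, ∫⁻ c, ∫⁻ b', ∫⁻ c', ∫⁻ t, Wf (g b c) (g b' c') t ∂(volume) ∂νγ ∂νβ ∂νγ ∂νβ)
      = ∫⁻ t, ∫⁻ b, ∫⁻ c, ∫⁻ b', ∫⁻ c', Wf (g b c) (g b' c') t ∂νγ ∂νβ ∂νγ ∂νβ ∂(volume) by
    simp only [swapR1, swapR2, swapR3]; exact swapR4]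
  refine lintegral_mono fun t => ?_
  have hIt : Measurable fun p : β × γ => eind (g p.1 p.2) t := by
    unfold eind
    exact Measurable.ite (measurableSet_lt measurable_const hg)
      measurable_const measurable_const
  exact keyt νβ νγ (fun b c => eind (g b c) t) hIt (fun b c => eind_le_one _ _)

lemma lint6 {α1 α2 α3 α4 α5 α6 : Type*} [MeasurableSpace α1] [MeasurableSpace α2]
    [MeasurableSpace α3] [MeasurableSpace α4] [MeasurableSpace α5] [MeasurableSpace α6]
    (μ1 : Measure α1) (μ2 : Measure α2) (μ3 : Measure α3) (μ4 : Measure α4)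
    (μ5 : Measure α5) (μ6 : Measure α6) [SFinite μ1] [SFinite μ2] [SFinite μ3]
    [SFinite μ4] [SFinite μ5] [SFinite μ6]
    (Φ : α1 × α2 × α3 × α4 × α5 × α6 → ℝ≥0∞) (hΦ : Measurable Φ) :
    ∫⁻ p, Φ p ∂(μ1.prod (μ2.prod (μ3.prod (μ4.prod (μ5.prod μ6))))) =
    ∫⁻ x1, ∫⁻ x2, ∫⁻ x3, ∫⁻ x4, ∫⁻ x5, ∫⁻ x6,
      Φ (x1, x2, x3, x4, x5, x6) ∂μ6 ∂μ5 ∂μ4 ∂μ3 ∂μ2 ∂μ1 := by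
  rw [lintegral_prod _ hΦ.aemeasurable]
  refine lintegral_congr fun x1 => ?_
  have h1 : Measurable fun q : α2 × α3 × α4 × α5 × α6 => Φ (x1, q) :=
    hΦ.comp measurable_prodMk_left
  rw [lintegral_prod _ h1.aemeasurable]
  refine lintegral_congr fun x2 => ?_
  have h2 : Measurable fun q : α3 × α4 × α5 × α6 => Φ (x1, x2, q) :=
    h1.comp measurable_prodMk_left
  rw [lintegral_prod _ h2.aemeasurable]
  refine lintegral_congr fun x3 => ?_
  have h3 : Measurable fun q : α4 × α5 × α6 => Φ (x1, x2, x3, q) :=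
    h2.comp measurable_prodMk_left
  rw [lintegral_prod _ h3.aemeasurable]
  refine lintegral_congr fun x4 => ?_
  have h4 : Measurable fun q : α5 × α6 => Φ (x1, x2, x3, x4, q) :=
    h3.comp measurable_prodMk_left
  rw [lintegral_prod _ h4.aemeasurable]

/-- If `A, B, C` are mutually independent random variables and
`(A', B', C')` is an i.i.d. copy of `(A, B, C)` independent of it (encoded by the joint
distribution of the six variables being the product of the marginals, with `A' ~ A`,
`B' ~ B`, `C' ~ C`), then for any measurable real-valued `f` with both expectations finite,
`E|f(A,B,C) - f(A,B,C')| ≤ E|f(A,B,C) - f(A,B',C')|`. -/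
theorem stmt0 {Ω α β γ : Type*} [MeasurableSpace Ω] [MeasurableSpace α] [MeasurableSpace β]
    [MeasurableSpace γ] (μ : Measure Ω) [IsProbabilityMeasure μ]
    (A A' : Ω → α) (B B' : Ω → β) (C C' : Ω → γ)
    (hA : Measurable A) (hB : Measurable B) (hC : Measurable C)
    (hA' : Measurable A') (hB' : Measurable B') (hC' : Measurable C')
    (f : α → β → γ → ℝ) (hf : Measurable fun p : α × β × γ => f p.1 p.2.1 p.2.2)
    (hjoint : μ.map (fun ω => (A ω, B ω, C ω, A' ω, B' ω, C' ω)) =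
      (μ.map A).prod ((μ.map B).prod ((μ.map C).prod
        ((μ.map A).prod ((μ.map B).prod (μ.map C))))))
    (h1 : Integrable (fun ω => |f (A ω) (B ω) (C ω) - f (A ω) (B ω) (C' ω)|) μ)
    (h2 : Integrable (fun ω => |f (A ω) (B ω) (C ω) - f (A ω) (B' ω) (C' ω)|) μ) :
    ∫ ω, |f (A ω) (B ω) (C ω) - f (A ω) (B ω) (C' ω)| ∂μ ≤
      ∫ ω, |f (A ω) (B ω) (C ω) - f (A ω) (B' ω) (C' ω)| ∂μ := by
  haveI : IsProbabilityMeasure (μ.map A) := Measure.isProbabilityMeasure_map hA.aemeasurable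
  haveI : IsProbabilityMeasure (μ.map B) := Measure.isProbabilityMeasure_map hB.aemeasurable
  haveI : IsProbabilityMeasure (μ.map C) := Measure.isProbabilityMeasure_map hC.aemeasurable
  set T : Ω → α × β × γ × α × β × γ := fun ω => (A ω, B ω, C ω, A' ω, B' ω, C' ω) with hTdef
  have hT : Measurable T :=
    hA.prodMk (hB.prodMk (hC.prodMk (hA'.prodMk (hB'.prodMk hC'))))
  set Φ1 : α × β × γ × α × β × γ → ℝ≥0∞ :=
    fun p => ENNReal.ofReal |f p.1 p.2.1 p.2.2.1 - f p.1 p.2.1 p.2.2.2.2.2| with hΦ1def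
  set Φ2 : α × β × γ × α × β × γ → ℝ≥0∞ :=
    fun p => ENNReal.ofReal |f p.1 p.2.1 p.2.2.1 - f p.1 p.2.2.2.2.1 p.2.2.2.2.2| with hΦ2def
  have hfm1 : Measurable fun p : α × β × γ × α × β × γ => f p.1 p.2.1 p.2.2.1 :=
    hf.comp (measurable_fst.prodMk (measurable_snd.fst.prodMk measurable_snd.snd.fst))
  have hfm2 : Measurable fun p : α × β × γ × α × β × γ => f p.1 p.2.1 p.2.2.2.2.2 :=
    hf.comp (measurable_fst.prodMk
      (measurable_snd.fst.prodMk measurable_snd.snd.snd.snd.snd))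
  have hfm3 : Measurable fun p : α × β × γ × α × β × γ => f p.1 p.2.2.2.2.1 p.2.2.2.2.2 :=
    hf.comp (measurable_fst.prodMk
      (measurable_snd.snd.snd.snd.fst.prodMk measurable_snd.snd.snd.snd.snd))
  have hΦ1 : Measurable Φ1 := ((hfm1.sub hfm2).abs).ennreal_ofReal
  have hΦ2 : Measurable Φ2 := ((hfm1.sub hfm3).abs).ennreal_ofReal
  have EL : ∫⁻ ω, ENNReal.ofReal |f (A ω) (B ω) (C ω) - f (A ω) (B ω) (C' ω)| ∂μ
      = ∫⁻ a, ∫⁻ b, ∫⁻ c, ∫⁻ c', ENNReal.ofReal |f a b c - f a b c'|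
          ∂(μ.map C) ∂(μ.map C) ∂(μ.map B) ∂(μ.map A) := by
    have : ∫⁻ ω, ENNReal.ofReal |f (A ω) (B ω) (C ω) - f (A ω) (B ω) (C' ω)| ∂μ
        = ∫⁻ p, Φ1 p ∂(μ.map T) := (lintegral_map hΦ1 hT).symm
    rw [this, hjoint, lint6 _ _ _ _ _ _ Φ1 hΦ1]
    simp only [hΦ1def, lintegral_const, measure_univ, mul_one]
  have ER : ∫⁻ ω, ENNReal.ofReal |f (A ω) (B ω) (C ω) - f (A ω) (B' ω) (C' ω)| ∂μ
      = ∫⁻ a, ∫⁻ b, ∫⁻ c, ∫⁻ b', ∫⁻ c', ENNReal.ofReal |f a b c - f a b' c'|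
          ∂(μ.map C) ∂(μ.map B) ∂(μ.map C) ∂(μ.map B) ∂(μ.map A) := by
    have : ∫⁻ ω, ENNReal.ofReal |f (A ω) (B ω) (C ω) - f (A ω) (B' ω) (C' ω)| ∂μ
        = ∫⁻ p, Φ2 p ∂(μ.map T) := (lintegral_map hΦ2 hT).symm
    rw [this, hjoint, lint6 _ _ _ _ _ _ Φ2 hΦ2]
    simp only [hΦ2def, lintegral_const, measure_univ, mul_one]
  have hcore : ∫⁻ ω, ENNReal.ofReal |f (A ω) (B ω) (C ω) - f (A ω) (B ω) (C' ω)| ∂μ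
      ≤ ∫⁻ ω, ENNReal.ofReal |f (A ω) (B ω) (C ω) - f (A ω) (B' ω) (C' ω)| ∂μ := by
    rw [EL, ER]
    exact lintegral_mono fun a =>
      core (μ.map B) (μ.map C) (f a) (hf.comp measurable_prodMk_left)
  rw [integral_eq_lintegral_of_nonneg_ae (Filter.Eventually.of_forall fun ω => abs_nonneg _)
      h1.aestronglyMeasurable,
    integral_eq_lintegral_of_nonneg_ae (Filter.Eventually.of_forall fun ω => abs_nonneg _)
      h2.aestronglyMeasurable]
  refine ENNReal.toReal_mono ?_ hcore
  exact ((hasFiniteIntegral_iff_ofReal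
    (Filter.Eventually.of_forall fun ω => abs_nonneg _)).1 h2.hasFiniteIntegral).ne
end

section
/- Let $g:[0,1]\to\mathbb{R}$ be monotone nondecreasing and integrable, and let $U,U'$ be i.i.d. uniform random variables on $[0,1]$. Then $\mathbb{E}[|g(U)-g(U')|] = 2\,\mathbb{E}[g(U)\cdot(2U-1)]$. -/
open MeasureTheory

lemma real_sign_monotone' : Monotone Real.sign := by
  intro a b hab
  rcases lt_trichotomy a 0 with ha | ha | ha
  · rw [Real.sign_of_neg ha]
    rcases lt_trichotomy b 0 with hb | hb | hb
    · rw [Real.sign_of_neg hb]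
    · rw [hb, Real.sign_zero]; norm_num
    · rw [Real.sign_of_pos hb]; norm_num
  · subst ha
    rw [Real.sign_zero]
    rcases eq_or_lt_of_le hab with hb | hb
    · rw [← hb, Real.sign_zero]
    · rw [Real.sign_of_pos hb]; norm_num
  · rw [Real.sign_of_pos ha, Real.sign_of_pos (lt_of_lt_of_le ha hab)]

lemma real_sign_measurable' : Measurable Real.sign :=
  real_sign_monotone'.measurable

lemma real_sign_abs_le' (r : ℝ) : |Real.sign r| ≤ 1 := by
  rcases lt_trichotomy r 0 with h | h | h
  · rw [Real.sign_of_neg h]; norm_num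
  · rw [h, Real.sign_zero]; norm_num
  · rw [Real.sign_of_pos h]; norm_num

lemma uniform_key {G : ℝ → ℝ} (hG : Monotone G)
    (hGi : Integrable G (volume.restrict (Set.Icc (0:ℝ) 1))) :
    ∫ p : ℝ × ℝ, |G p.1 - G p.2|
        ∂((volume.restrict (Set.Icc (0:ℝ) 1)).prod (volume.restrict (Set.Icc (0:ℝ) 1)))
      = 2 * ∫ x, G x * (2 * x - 1) ∂(volume.restrict (Set.Icc (0:ℝ) 1)) := by
  set ν := volume.restrict (Set.Icc (0:ℝ) 1) with hν
  have hprob : IsProbabilityMeasure ν :=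
    ⟨by simp [hν, Real.volume_Icc]⟩
  have hGm : Measurable G := hG.measurable
  have hsgnm : Measurable fun p : ℝ × ℝ => Real.sign (p.1 - p.2) :=
    real_sign_measurable'.comp (measurable_fst.sub measurable_snd)
  -- pointwise identity
  have habs : ∀ p : ℝ × ℝ, |G p.1 - G p.2| = (G p.1 - G p.2) * Real.sign (p.1 - p.2) := by
    intro p
    rcases lt_trichotomy p.1 p.2 with h | h | h
    · rw [Real.sign_of_neg (by linarith), abs_of_nonpos (by have := hG h.le; linarith)]; ring
    · simp [h, Real.sign_zero]
    · rw [Real.sign_of_pos (by linarith), abs_of_nonneg (by have := hG h.le; linarith)]; ring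
  -- integrability
  have hmapfst : Measure.map Prod.fst (ν.prod ν) = ν := by
    rw [Measure.map_fst_prod, measure_univ, one_smul]
  have hmapsnd : Measure.map Prod.snd (ν.prod ν) = ν := by
    rw [Measure.map_snd_prod, measure_univ, one_smul]
  have hGfst : Integrable (fun p : ℝ × ℝ => G p.1) (ν.prod ν) := by
    have := (integrable_map_measure hGm.aestronglyMeasurable
      measurable_fst.aemeasurable (μ := ν.prod ν)).mp (by rwa [hmapfst])
    exact this
  have hGsnd : Integrable (fun p : ℝ × ℝ => G p.2) (ν.prod ν) := by
    have := (integrable_map_measure hGm.aestronglyMeasurable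
      measurable_snd.aemeasurable (μ := ν.prod ν)).mp (by rwa [hmapsnd])
    exact this
  have hGsfst : Integrable (fun p : ℝ × ℝ => G p.1 * Real.sign (p.1 - p.2)) (ν.prod ν) := by
    refine hGfst.mono ((hGm.comp measurable_fst).mul hsgnm).aestronglyMeasurable ?_
    filter_upwards with p
    rw [norm_mul]
    calc ‖G p.1‖ * ‖Real.sign (p.1 - p.2)‖ ≤ ‖G p.1‖ * 1 :=
          mul_le_mul_of_nonneg_left (real_sign_abs_le' _) (norm_nonneg _)
      _ = ‖G p.1‖ := mul_one _
  have hGssnd : Integrable (fun p : ℝ × ℝ => G p.2 * Real.sign (p.1 - p.2)) (ν.prod ν) := by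
    refine hGsnd.mono ((hGm.comp measurable_snd).mul hsgnm).aestronglyMeasurable ?_
    filter_upwards with p
    rw [norm_mul]
    calc ‖G p.2‖ * ‖Real.sign (p.1 - p.2)‖ ≤ ‖G p.2‖ * 1 :=
          mul_le_mul_of_nonneg_left (real_sign_abs_le' _) (norm_nonneg _)
      _ = ‖G p.2‖ := mul_one _
  -- swap symmetry
  have hswap : ∫ p : ℝ × ℝ, G p.2 * Real.sign (p.1 - p.2) ∂(ν.prod ν)
      = - ∫ p : ℝ × ℝ, G p.1 * Real.sign (p.1 - p.2) ∂(ν.prod ν) := by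
    have h1 : ∫ p : ℝ × ℝ, G p.2 * Real.sign (p.1 - p.2) ∂(ν.prod ν)
        = ∫ p : ℝ × ℝ, G p.1 * Real.sign (p.2 - p.1) ∂(ν.prod ν) := by
      have hmF : Measurable fun p : ℝ × ℝ => G p.1 * Real.sign (p.2 - p.1) :=
        (hGm.comp measurable_fst).mul
          (real_sign_measurable'.comp (measurable_snd.sub measurable_fst))
      conv_rhs => rw [← Measure.prod_swap]
      rw [integral_map measurable_swap.aemeasurable hmF.aestronglyMeasurable]
      rfl
    rw [h1, ← integral_neg]
    congr 1
    funext p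
    rw [show p.2 - p.1 = -(p.1 - p.2) by ring, Real.sign_neg]
    ring
  -- inner integral computation
  have hinner : ∀ x ∈ Set.Icc (0:ℝ) 1, ∫ y, Real.sign (x - y) ∂ν = 2 * x - 1 := by
    intro x hx
    have hfun : (fun y => Real.sign (x - y))
        = fun y => Set.indicator (Set.Iio x) (fun _ => (1:ℝ)) y
            - Set.indicator (Set.Ioi x) (fun _ => (1:ℝ)) y := by
      funext y
      rcases lt_trichotomy y x with h | h | h
      · rw [Real.sign_of_pos (by linarith)]
        rw [Set.indicator_of_mem (Set.mem_Iio.mpr h), Set.indicator_of_notMem (by simp [Set.mem_Ioi]; linarith)]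
        norm_num
      · rw [h, sub_self, Real.sign_zero]
        rw [Set.indicator_of_notMem (by simp), Set.indicator_of_notMem (by simp)]
        norm_num
      · rw [Real.sign_of_neg (by linarith)]
        rw [Set.indicator_of_notMem (by simp [Set.mem_Iio]; linarith), Set.indicator_of_mem (Set.mem_Ioi.mpr h)]
        norm_num
    have hiio : ν (Set.Iio x) = ENNReal.ofReal x := by
      rw [hν, Measure.restrict_apply measurableSet_Iio]
      have : Set.Iio x ∩ Set.Icc (0:ℝ) 1 = Set.Ico 0 x := by
        ext y
        simp only [Set.mem_inter_iff, Set.mem_Iio, Set.mem_Icc, Set.mem_Ico]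
        constructor
        · rintro ⟨h1, h2, h3⟩; exact ⟨h2, h1⟩
        · rintro ⟨h1, h2⟩; exact ⟨h2, h1, by linarith [hx.2]⟩
      rw [this, Real.volume_Ico, sub_zero]
    have hioi : ν (Set.Ioi x) = ENNReal.ofReal (1 - x) := by
      rw [hν, Measure.restrict_apply measurableSet_Ioi]
      have : Set.Ioi x ∩ Set.Icc (0:ℝ) 1 = Set.Ioc x 1 := by
        ext y
        simp only [Set.mem_inter_iff, Set.mem_Ioi, Set.mem_Icc, Set.mem_Ioc]
        constructor
        · rintro ⟨h1, h2, h3⟩; exact ⟨h1, h3⟩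
        · rintro ⟨h1, h2⟩; exact ⟨h1, by linarith [hx.1], h2⟩
      rw [this, Real.volume_Ioc]
    have hind1 : Integrable (Set.indicator (Set.Iio x) (fun _ => (1:ℝ))) ν := by
      rw [integrable_indicator_iff measurableSet_Iio]
      exact (integrableOn_const_iff).mpr (Or.inr (measure_lt_top ν _))
    have hind2 : Integrable (Set.indicator (Set.Ioi x) (fun _ => (1:ℝ))) ν := by
      rw [integrable_indicator_iff measurableSet_Ioi]
      exact (integrableOn_const_iff).mpr (Or.inr (measure_lt_top ν _))
    rw [hfun, integral_sub hind1 hind2, integral_indicator_const _ measurableSet_Iio,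
      integral_indicator_const _ measurableSet_Ioi, measureReal_def, measureReal_def, hiio, hioi]
    simp only [smul_eq_mul, mul_one]
    rw [ENNReal.toReal_ofReal hx.1, ENNReal.toReal_ofReal (by linarith [hx.2])]
    ring
  -- main computation
  calc ∫ p : ℝ × ℝ, |G p.1 - G p.2| ∂(ν.prod ν)
      = ∫ p : ℝ × ℝ, (G p.1 * Real.sign (p.1 - p.2) - G p.2 * Real.sign (p.1 - p.2))
          ∂(ν.prod ν) := by
        congr 1; funext p; rw [habs p]; ring
    _ = (∫ p : ℝ × ℝ, G p.1 * Real.sign (p.1 - p.2) ∂(ν.prod ν))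
          - ∫ p : ℝ × ℝ, G p.2 * Real.sign (p.1 - p.2) ∂(ν.prod ν) :=
        integral_sub hGsfst hGssnd
    _ = 2 * ∫ p : ℝ × ℝ, G p.1 * Real.sign (p.1 - p.2) ∂(ν.prod ν) := by
        rw [hswap]; ring
    _ = 2 * ∫ x, ∫ y, G x * Real.sign (x - y) ∂ν ∂ν := by
        rw [integral_prod _ hGsfst]
    _ = 2 * ∫ x, G x * (2 * x - 1) ∂ν := by
        congr 1
        refine integral_congr_ae ?_
        filter_upwards [ae_restrict_mem measurableSet_Icc] with x hx
        rw [integral_const_mul, hinner x hx]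

/-- If `g : [0,1] → ℝ` is monotone nondecreasing and integrable, and
`U, U'` are i.i.d. `Unif[0,1]` random variables, then
`E|g(U) - g(U')| = 2 E[g(U)(2U - 1)]`. -/
theorem stmt1 {Ω : Type*} [MeasurableSpace Ω] (μ : Measure Ω) [IsProbabilityMeasure μ]
    (U U' : Ω → ℝ) (hU : Measurable U) (hU' : Measurable U')
    (hind : ProbabilityTheory.IndepFun U U' μ)
    (hdU : μ.map U = volume.restrict (Set.Icc (0 : ℝ) 1))
    (hdU' : μ.map U' = volume.restrict (Set.Icc (0 : ℝ) 1))
    (g : ℝ → ℝ) (hmono : MonotoneOn g (Set.Icc (0 : ℝ) 1))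
    (hint : Integrable (fun ω => g (U ω)) μ) :
    ∫ ω, |g (U ω) - g (U' ω)| ∂μ = 2 * ∫ ω, g (U ω) * (2 * U ω - 1) ∂μ := by
  set ν := volume.restrict (Set.Icc (0:ℝ) 1) with hνdef
  -- clamped extension of g
  set G : ℝ → ℝ := fun x => g (max 0 (min x 1)) with hGdef
  have hclamp_mem : ∀ x : ℝ, max 0 (min x 1) ∈ Set.Icc (0:ℝ) 1 :=
    fun x => ⟨le_max_left _ _, max_le zero_le_one (min_le_right _ _)⟩
  have hclamp_id : ∀ x ∈ Set.Icc (0:ℝ) 1, max 0 (min x 1) = x := by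
    intro x hx
    rw [min_eq_left hx.2, max_eq_right hx.1]
  have hGmono : Monotone G := by
    intro a b hab
    exact hmono (hclamp_mem a) (hclamp_mem b)
      (max_le_max le_rfl (min_le_min hab le_rfl))
  have hGeq : ∀ x ∈ Set.Icc (0:ℝ) 1, G x = g x := by
    intro x hx; rw [hGdef]; simp only; rw [hclamp_id x hx]
  have hGm : Measurable G := hGmono.measurable
  -- a.e. membership
  have hUmem : ∀ᵐ ω ∂μ, U ω ∈ Set.Icc (0:ℝ) 1 := by
    have h : ∀ᵐ x ∂(μ.map U), x ∈ Set.Icc (0:ℝ) 1 := by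
      rw [hdU]; exact ae_restrict_mem measurableSet_Icc
    exact (ae_map_iff hU.aemeasurable measurableSet_Icc).mp h
  have hU'mem : ∀ᵐ ω ∂μ, U' ω ∈ Set.Icc (0:ℝ) 1 := by
    have h : ∀ᵐ x ∂(μ.map U'), x ∈ Set.Icc (0:ℝ) 1 := by
      rw [hdU']; exact ae_restrict_mem measurableSet_Icc
    exact (ae_map_iff hU'.aemeasurable measurableSet_Icc).mp h
  have hcongrU : (fun ω => g (U ω)) =ᵐ[μ] fun ω => G (U ω) := by
    filter_upwards [hUmem] with ω hω
    exact (hGeq _ hω).symm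
  have hcongrU' : (fun ω => g (U' ω)) =ᵐ[μ] fun ω => G (U' ω) := by
    filter_upwards [hU'mem] with ω hω
    exact (hGeq _ hω).symm
  have hintG : Integrable (fun ω => G (U ω)) μ := hint.congr hcongrU
  have hGν : Integrable G ν := by
    rw [← hdU]
    exact (integrable_map_measure hGm.aestronglyMeasurable hU.aemeasurable).mpr hintG
  -- product measure from independence
  have hmapprod : μ.map (fun ω => (U ω, U' ω)) = ν.prod ν := by
    rw [(ProbabilityTheory.indepFun_iff_map_prod_eq_prod_map_map
      hU.aemeasurable hU'.aemeasurable).mp hind, hdU, hdU']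
  -- rewrite LHS
  have hLHS : ∫ ω, |g (U ω) - g (U' ω)| ∂μ = ∫ p : ℝ × ℝ, |G p.1 - G p.2| ∂(ν.prod ν) := by
    have h1 : ∫ ω, |g (U ω) - g (U' ω)| ∂μ = ∫ ω, |G (U ω) - G (U' ω)| ∂μ := by
      refine integral_congr_ae ?_
      filter_upwards [hcongrU, hcongrU'] with ω h1 h2
      rw [h1, h2]
    have habsm : Measurable fun p : ℝ × ℝ => |G p.1 - G p.2| :=
      ((hGm.comp measurable_fst).sub (hGm.comp measurable_snd)).abs
    rw [h1, ← hmapprod,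
      integral_map (hU.prodMk hU').aemeasurable habsm.aestronglyMeasurable]
  -- rewrite RHS
  have hRHS : ∫ ω, g (U ω) * (2 * U ω - 1) ∂μ = ∫ x, G x * (2 * x - 1) ∂ν := by
    have h1 : ∫ ω, g (U ω) * (2 * U ω - 1) ∂μ = ∫ ω, G (U ω) * (2 * U ω - 1) ∂μ := by
      refine integral_congr_ae ?_
      filter_upwards [hcongrU] with ω h1
      rw [h1]
    have hm2 : Measurable fun x : ℝ => G x * (2 * x - 1) :=
      hGm.mul ((measurable_const.mul measurable_id).sub measurable_const)
    rw [h1, ← hdU, integral_map hU.aemeasurable hm2.aestronglyMeasurable]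
  rw [hLHS, hRHS]
  exact uniform_key hGmono hGν
end

section
/- Let $X$ and $Y$ be real random variables and $Z$ a random variable such that $f(Z)$ has the same distribution as $X$ and $g(Z)$ has the same distribution as $Y$, where $f,g$ are monotone nondecreasing functions. Then $\mathbb{E}[XY] \le \mathbb{E}[f(Z)g(Z)]$, provided all expectations exist. -/
open MeasureTheory Set ENNReal

lemma nested_upper {Ω : Type*} (Z : Ω → ℝ) (φ ψ : ℝ → ℝ) (hφ : Monotone φ) (hψ : Monotone ψ)
    (s t : ℝ) :
    {ω | s < φ (Z ω)} ⊆ {ω | t < ψ (Z ω)} ∨ {ω | t < ψ (Z ω)} ⊆ {ω | s < φ (Z ω)} := by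
  by_contra h
  push_neg at h
  obtain ⟨h1, h2⟩ := h
  rw [Set.not_subset] at h1 h2
  obtain ⟨ω₁, hω₁, hω₁'⟩ := h1
  obtain ⟨ω₂, hω₂, hω₂'⟩ := h2
  simp only [Set.mem_setOf_eq] at *
  rcases le_total (Z ω₁) (Z ω₂) with h | h
  · exact hω₂' (lt_of_lt_of_le hω₁ (hφ h))
  · exact hω₁' (lt_of_lt_of_le hω₂ (hψ h))

lemma measure_inter_nested {Ω : Type*} [MeasurableSpace Ω] (μ : Measure Ω) {U V : Set Ω}
    (h : U ⊆ V ∨ V ⊆ U) : μ (U ∩ V) = min (μ U) (μ V) := by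
  rcases h with h | h
  · rw [Set.inter_eq_left.mpr h]
    exact (min_eq_left (measure_mono h)).symm
  · rw [Set.inter_eq_right.mpr h]
    exact (min_eq_right (measure_mono h)).symm

lemma layerA {Ω : Type*} [MeasurableSpace Ω] (μ : Measure Ω) [SFinite μ]
    (A B : Ω → ℝ) (hA : Measurable A) (hB : Measurable B)
    (hA0 : ∀ ω, 0 ≤ A ω) :
    ∫⁻ ω, ENNReal.ofReal (A ω * B ω) ∂μ
      = ∫⁻ p : ℝ × ℝ, μ {ω | 0 < p.1 ∧ p.1 < A ω ∧ 0 < p.2 ∧ p.2 < B ω} := by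
  set S : Set (Ω × (ℝ × ℝ)) :=
    {q | 0 < q.2.1 ∧ q.2.1 < A q.1 ∧ 0 < q.2.2 ∧ q.2.2 < B q.1} with hSdef
  have hS : MeasurableSet S := by
    have : S = ({q : Ω × (ℝ × ℝ) | 0 < q.2.1} ∩ {q | q.2.1 < A q.1}) ∩
        ({q | 0 < q.2.2} ∩ {q | q.2.2 < B q.1}) := by
      ext q; simp [hSdef, Set.mem_setOf_eq, and_assoc]
    rw [this]
    exact ((measurableSet_lt measurable_const (measurable_fst.comp measurable_snd)).inter
        (measurableSet_lt (measurable_fst.comp measurable_snd) (hA.comp measurable_fst))).inter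
      ((measurableSet_lt measurable_const (measurable_snd.comp measurable_snd)).inter
        (measurableSet_lt (measurable_snd.comp measurable_snd) (hB.comp measurable_fst)))
  have step1 : ∀ ω, ENNReal.ofReal (A ω * B ω)
      = ∫⁻ p : ℝ × ℝ, S.indicator 1 (ω, p) := by
    intro ω
    have hfun : (fun p : ℝ × ℝ => S.indicator (1 : Ω × (ℝ × ℝ) → ℝ≥0∞) (ω, p))
        = (Ioo 0 (A ω) ×ˢ Ioo 0 (B ω)).indicator 1 := by
      funext p
      simp [hSdef, Set.indicator_apply, Set.mem_setOf_eq, Set.mem_prod, Set.mem_Ioo, and_assoc]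
    rw [hfun, lintegral_indicator_one (measurableSet_Ioo.prod measurableSet_Ioo),
      Measure.volume_eq_prod, Measure.prod_prod, Real.volume_Ioo, Real.volume_Ioo,
      sub_zero, sub_zero, ENNReal.ofReal_mul (hA0 ω)]
  have step2 : ∀ p : ℝ × ℝ, (∫⁻ ω, S.indicator 1 (ω, p) ∂μ)
      = μ {ω | 0 < p.1 ∧ p.1 < A ω ∧ 0 < p.2 ∧ p.2 < B ω} := by
    intro p
    have hfun : (fun ω => S.indicator (1 : Ω × (ℝ × ℝ) → ℝ≥0∞) (ω, p))
        = ({ω | 0 < p.1 ∧ p.1 < A ω ∧ 0 < p.2 ∧ p.2 < B ω}).indicator 1 := by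
      funext ω
      simp [hSdef, Set.indicator_apply, Set.mem_setOf_eq]
    rw [hfun, lintegral_indicator_one]
    have hAB : MeasurableSet {ω | p.1 < A ω ∧ p.2 < B ω} := by
      rw [Set.setOf_and]
      exact (measurableSet_lt measurable_const hA).inter (measurableSet_lt measurable_const hB)
    by_cases h1 : 0 < p.1 <;> by_cases h2 : 0 < p.2 <;>
      simp [h1, h2, hAB]
  calc ∫⁻ ω, ENNReal.ofReal (A ω * B ω) ∂μ
      = ∫⁻ ω, (∫⁻ p : ℝ × ℝ, S.indicator 1 (ω, p)) ∂μ := lintegral_congr step1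
    _ = ∫⁻ p : ℝ × ℝ, ∫⁻ ω, S.indicator 1 (ω, p) ∂μ :=
        lintegral_lintegral_swap (f := fun ω p => S.indicator 1 (ω, p))
          ((measurable_one.indicator hS).aemeasurable)
    _ = _ := lintegral_congr step2

lemma corelem {Ω : Type*} [MeasurableSpace Ω] (μ : Measure Ω) [IsProbabilityMeasure μ]
    (A B C D : Ω → ℝ) (hA : Measurable A) (hB : Measurable B) (hC : Measurable C)
    (hD : Measurable D) (hA0 : ∀ ω, 0 ≤ A ω) (hB0 : ∀ ω, 0 ≤ B ω)
    (hC0 : ∀ ω, 0 ≤ C ω) (hD0 : ∀ ω, 0 ≤ D ω)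
    (hCD : Integrable (fun ω => C ω * D ω) μ)
    (h : ∀ s t : ℝ, μ {ω | s < A ω ∧ t < B ω} ≤ μ {ω | s < C ω ∧ t < D ω}) :
    ∫ ω, A ω * B ω ∂μ ≤ ∫ ω, C ω * D ω ∂μ := by
  rw [integral_eq_lintegral_of_nonneg_ae
      (Filter.Eventually.of_forall fun ω => mul_nonneg (hA0 ω) (hB0 ω))
      (hA.mul hB).aestronglyMeasurable,
    integral_eq_lintegral_of_nonneg_ae
      (Filter.Eventually.of_forall fun ω => mul_nonneg (hC0 ω) (hD0 ω))
      (hC.mul hD).aestronglyMeasurable]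
  have hfin : ∫⁻ ω, ENNReal.ofReal (C ω * D ω) ∂μ ≠ ⊤ :=
    (lt_of_le_of_lt (lintegral_mono fun ω => Real.ofReal_le_enorm _)
      hCD.hasFiniteIntegral).ne
  apply ENNReal.toReal_mono hfin
  rw [layerA μ A B hA hB hA0, layerA μ C D hC hD hC0]
  refine lintegral_mono fun p => ?_
  by_cases h1 : 0 < p.1
  · by_cases h2 : 0 < p.2
    · simpa [h1, h2] using h p.1 p.2
    · simp [h2]
  · simp [h1]

noncomputable def trunc (n : ℕ) (x : ℝ) : ℝ := max (min x n) (-(n : ℝ))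

lemma trunc_mono (n : ℕ) : Monotone (trunc n) :=
  (monotone_id.min monotone_const).max monotone_const

lemma trunc_meas (n : ℕ) : Measurable (trunc n) := (trunc_mono n).measurable

lemma trunc_abs_le (n : ℕ) (x : ℝ) : |trunc n x| ≤ |x| := by
  rw [abs_le]
  constructor
  · refine le_trans ?_ (le_max_left _ _)
    exact le_min (neg_abs_le x) (le_trans (neg_nonpos.mpr (abs_nonneg x)) n.cast_nonneg)
  · exact max_le (le_trans (min_le_left _ _) (le_abs_self x))
      (le_trans (neg_nonpos.mpr n.cast_nonneg) (abs_nonneg x))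

lemma trunc_le (n : ℕ) (x : ℝ) : trunc n x ≤ n :=
  max_le (min_le_right _ _) (neg_le_self n.cast_nonneg)

lemma trunc_ge (n : ℕ) (x : ℝ) : -(n : ℝ) ≤ trunc n x := le_max_right _ _

lemma trunc_eventually (x : ℝ) : ∀ᶠ n : ℕ in Filter.atTop, trunc n x = x := by
  filter_upwards [Filter.eventually_ge_atTop ⌈|x|⌉₊] with n hn
  have hx : |x| ≤ (n : ℝ) := le_trans (Nat.le_ceil _) (Nat.cast_le.mpr hn)
  rw [trunc, min_eq_left (le_trans (le_abs_self x) hx),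
    max_eq_left (le_trans (neg_le_neg hx) (neg_abs_le x))]

/-- Rearrangement inequality for couplings: if `X, Y` are real random
variables and `Z` a real random variable such that `f(Z) =ᵈ X` and `g(Z) =ᵈ Y` for monotone
nondecreasing `f, g`, and all expectations exist, then `E[XY] ≤ E[f(Z) g(Z)]`. -/
theorem stmt2 {Ω : Type*} [MeasurableSpace Ω] (μ : Measure Ω) [IsProbabilityMeasure μ]
    (X Y Z : Ω → ℝ) (f g : ℝ → ℝ) (hf : Monotone f) (hg : Monotone g)
    (hX : μ.map X = μ.map (fun ω => f (Z ω)))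
    (hY : μ.map Y = μ.map (fun ω => g (Z ω)))
    (hXint : Integrable X μ) (hYint : Integrable Y μ)
    (h1 : Integrable (fun ω => X ω * Y ω) μ)
    (h2 : Integrable (fun ω => f (Z ω) * g (Z ω)) μ) :
    ∫ ω, X ω * Y ω ∂μ ≤ ∫ ω, f (Z ω) * g (Z ω) ∂μ := by
  have hXae : AEMeasurable X μ := hXint.aemeasurable
  have hYae : AEMeasurable Y μ := hYint.aemeasurable
  have hFae : AEMeasurable (fun ω => f (Z ω)) μ := by
    by_contra h
    rw [Measure.map_of_not_aemeasurable h] at hX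
    have h0 : (μ.map X) Set.univ = 1 := by
      rw [Measure.map_apply_of_aemeasurable hXae MeasurableSet.univ, Set.preimage_univ,
        measure_univ]
    rw [hX] at h0
    simp at h0
  have hGae : AEMeasurable (fun ω => g (Z ω)) μ := by
    by_contra h
    rw [Measure.map_of_not_aemeasurable h] at hY
    have h0 : (μ.map Y) Set.univ = 1 := by
      rw [Measure.map_apply_of_aemeasurable hYae MeasurableSet.univ, Set.preimage_univ,
        measure_univ]
    rw [hY] at h0
    simp at h0
  -- marginal transfer
  have marg : ∀ (φ : ℝ → ℝ), Monotone φ → ∀ (W V : Ω → ℝ), AEMeasurable W μ →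
      AEMeasurable V μ → μ.map W = μ.map V → ∀ s : ℝ,
      μ {ω | s < φ (W ω)} = μ {ω | s < φ (V ω)} := by
    intro φ hφ W V hW hV hmap s
    have hset : MeasurableSet (φ ⁻¹' Set.Ioi s) := hφ.measurable measurableSet_Ioi
    have e1 : {ω | s < φ (W ω)} = W ⁻¹' (φ ⁻¹' Set.Ioi s) := rfl
    have e2 : {ω | s < φ (V ω)} = V ⁻¹' (φ ⁻¹' Set.Ioi s) := rfl
    rw [e1, e2, ← Measure.map_apply_of_aemeasurable hW hset,
      ← Measure.map_apply_of_aemeasurable hV hset, hmap]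
  -- integral transfer for truncations
  have intransferX : ∀ n : ℕ, ∫ ω, trunc n (X ω) ∂μ = ∫ ω, trunc n (f (Z ω)) ∂μ := by
    intro n
    rw [← integral_map hXae (trunc_meas n).aestronglyMeasurable, hX,
      integral_map hFae (trunc_meas n).aestronglyMeasurable]
  have intransferY : ∀ n : ℕ, ∫ ω, trunc n (Y ω) ∂μ = ∫ ω, trunc n (g (Z ω)) ∂μ := by
    intro n
    rw [← integral_map hYae (trunc_meas n).aestronglyMeasurable, hY,
      integral_map hGae (trunc_meas n).aestronglyMeasurable]
  -- measurable representatives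
  obtain ⟨X', hX'm, hX'e⟩ : ∃ X' : Ω → ℝ, Measurable X' ∧ X =ᵐ[μ] X' :=
    ⟨hXae.mk X, hXae.measurable_mk, hXae.ae_eq_mk⟩
  obtain ⟨Y', hY'm, hY'e⟩ : ∃ Y' : Ω → ℝ, Measurable Y' ∧ Y =ᵐ[μ] Y' :=
    ⟨hYae.mk Y, hYae.measurable_mk, hYae.ae_eq_mk⟩
  obtain ⟨F', hF'm, hF'e⟩ : ∃ F' : Ω → ℝ, Measurable F' ∧ (fun ω => f (Z ω)) =ᵐ[μ] F' :=
    ⟨hFae.mk _, hFae.measurable_mk, hFae.ae_eq_mk⟩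
  obtain ⟨G', hG'm, hG'e⟩ : ∃ G' : Ω → ℝ, Measurable G' ∧ (fun ω => g (Z ω)) =ᵐ[μ] G' :=
    ⟨hGae.mk _, hGae.measurable_mk, hGae.ae_eq_mk⟩
  -- per-n inequality
  have stepn : ∀ n : ℕ, ∫ ω, trunc n (X ω) * trunc n (Y ω) ∂μ
      ≤ ∫ ω, trunc n (f (Z ω)) * trunc n (g (Z ω)) ∂μ := by
    intro n
    set c : ℝ → ℝ := fun x => trunc n x + n with hcdef
    have hcmono : Monotone c := (trunc_mono n).add_const _
    have hcmeas : Measurable c := hcmono.measurable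
    have hc0 : ∀ x, 0 ≤ c x := by
      intro x
      have := trunc_ge n x
      simp only [hcdef]
      linarith
    have hcbd : ∀ x, c x ≤ 2 * n := by
      intro x
      have := trunc_le n x
      simp only [hcdef]
      linarith
    have ibound : ∀ (U V : Ω → ℝ), Measurable U → Measurable V →
        Integrable (fun ω => c (U ω) * c (V ω)) μ := by
      intro U V hU hV
      refine Integrable.mono' (integrable_const ((2 * n : ℝ) * (2 * n)))
        ((hcmeas.comp hU).mul (hcmeas.comp hV)).aestronglyMeasurable
        (Filter.Eventually.of_forall fun ω => ?_)
      rw [Real.norm_eq_abs, abs_mul, abs_of_nonneg (hc0 _), abs_of_nonneg (hc0 _)]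
      exact mul_le_mul (hcbd _) (hcbd _) (hc0 _)
        (by positivity)
    -- transfer of single marginals to representatives
    have trX : ∀ s : ℝ, μ {ω | s < c (X' ω)} = μ {ω | s < c (F' ω)} := by
      intro s
      have e1 : μ {ω | s < c (X ω)} = μ {ω | s < c (X' ω)} :=
        measure_congr (hX'e.mono fun ω h =>
          show (s < c (X ω)) = (s < c (X' ω)) by rw [h])
      have e2 : μ {ω | s < c (f (Z ω))} = μ {ω | s < c (F' ω)} :=
        measure_congr (hF'e.mono fun ω h =>
          show (s < c (f (Z ω))) = (s < c (F' ω)) by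
            have h' : f (Z ω) = F' ω := h; rw [h'])
      rw [← e1, ← e2]
      exact marg c hcmono X _ hXae hFae hX s
    have trY : ∀ t : ℝ, μ {ω | t < c (Y' ω)} = μ {ω | t < c (G' ω)} := by
      intro t
      have e1 : μ {ω | t < c (Y ω)} = μ {ω | t < c (Y' ω)} :=
        measure_congr (hY'e.mono fun ω h =>
          show (t < c (Y ω)) = (t < c (Y' ω)) by rw [h])
      have e2 : μ {ω | t < c (g (Z ω))} = μ {ω | t < c (G' ω)} :=
        measure_congr (hG'e.mono fun ω h =>
          show (t < c (g (Z ω))) = (t < c (G' ω)) by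
            have h' : g (Z ω) = G' ω := h; rw [h'])
      rw [← e1, ← e2]
      exact marg c hcmono Y _ hYae hGae hY t
    have trF : ∀ s : ℝ, μ {ω | s < c (F' ω)} = μ {ω | s < c (f (Z ω))} :=
      fun s => (measure_congr (hF'e.mono fun ω h =>
        show (s < c (f (Z ω))) = (s < c (F' ω)) by
          have h' : f (Z ω) = F' ω := h; rw [h'])).symm
    have trG : ∀ t : ℝ, μ {ω | t < c (G' ω)} = μ {ω | t < c (g (Z ω))} :=
      fun t => (measure_congr (hG'e.mono fun ω h =>
        show (t < c (g (Z ω))) = (t < c (G' ω)) by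
          have h' : g (Z ω) = G' ω := h; rw [h'])).symm
    have hkey : ∀ s t : ℝ, μ {ω | s < c (X' ω) ∧ t < c (Y' ω)}
        ≤ μ {ω | s < c (F' ω) ∧ t < c (G' ω)} := by
      intro s t
      calc μ {ω | s < c (X' ω) ∧ t < c (Y' ω)}
          ≤ min (μ {ω | s < c (X' ω)}) (μ {ω | t < c (Y' ω)}) :=
            le_min (measure_mono fun ω h => h.1) (measure_mono fun ω h => h.2)
        _ = min (μ {ω | s < c (f (Z ω))}) (μ {ω | t < c (g (Z ω))}) := by
            rw [trX s, trY t, trF s, trG t]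
        _ = μ ({ω | s < c (f (Z ω))} ∩ {ω | t < c (g (Z ω))}) :=
            (measure_inter_nested μ (nested_upper Z (fun x => c (f x)) (fun x => c (g x))
              (hcmono.comp hf) (hcmono.comp hg) s t)).symm
        _ = μ {ω | s < c (F' ω) ∧ t < c (G' ω)} := by
            apply measure_congr
            filter_upwards [hF'e, hG'e] with ω hF hG
            show ((s < c (f (Z ω))) ∧ (t < c (g (Z ω)))) = ((s < c (F' ω)) ∧ (t < c (G' ω)))
            have hF' : f (Z ω) = F' ω := hF
            have hG' : g (Z ω) = G' ω := hG
            rw [hF', hG']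
    have hcore : ∫ ω, c (X' ω) * c (Y' ω) ∂μ ≤ ∫ ω, c (F' ω) * c (G' ω) ∂μ :=
      corelem μ _ _ _ _ (hcmeas.comp hX'm) (hcmeas.comp hY'm) (hcmeas.comp hF'm)
        (hcmeas.comp hG'm) (fun ω => hc0 _) (fun ω => hc0 _) (fun ω => hc0 _)
        (fun ω => hc0 _) (ibound F' G' hF'm hG'm) hkey
    -- expansion
    have itrunc : ∀ (U : Ω → ℝ), Measurable U → Integrable (fun ω => trunc n (U ω)) μ := by
      intro U hU
      refine Integrable.mono' (integrable_const (n : ℝ))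
        ((trunc_meas n).comp hU).aestronglyMeasurable
        (Filter.Eventually.of_forall fun ω => ?_)
      rw [Real.norm_eq_abs, abs_le]
      exact ⟨trunc_ge n _, trunc_le n _⟩
    have itrunc2 : ∀ (U V : Ω → ℝ), Measurable U → Measurable V →
        Integrable (fun ω => trunc n (U ω) * trunc n (V ω)) μ := by
      intro U V hU hV
      refine Integrable.mono' (integrable_const ((n : ℝ) * n))
        (((trunc_meas n).comp hU).mul ((trunc_meas n).comp hV)).aestronglyMeasurable
        (Filter.Eventually.of_forall fun ω => ?_)
      rw [Real.norm_eq_abs, abs_mul]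
      refine mul_le_mul ?_ ?_ (abs_nonneg _) n.cast_nonneg <;>
        · rw [abs_le]; exact ⟨trunc_ge n _, trunc_le n _⟩
    have expand : ∀ (U V : Ω → ℝ), Measurable U → Measurable V →
        ∫ ω, c (U ω) * c (V ω) ∂μ
          = ∫ ω, trunc n (U ω) * trunc n (V ω) ∂μ + ((n : ℝ) * ∫ ω, trunc n (U ω) ∂μ
            + ((n : ℝ) * ∫ ω, trunc n (V ω) ∂μ + (n : ℝ) * n)) := by
      intro U V hU hV
      have e0 : ∫ ω, c (U ω) * c (V ω) ∂μ
          = ∫ ω, (trunc n (U ω) * trunc n (V ω) + ((n : ℝ) * trunc n (U ω)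
            + ((n : ℝ) * trunc n (V ω) + (n : ℝ) * n))) ∂μ := by
        congr 1
        funext ω
        simp only [hcdef]
        ring
      have i3 : Integrable (fun ω => (n : ℝ) * trunc n (V ω) + (n : ℝ) * n) μ :=
        ((itrunc V hV).const_mul _).add (integrable_const _)
      have i2 : Integrable (fun ω => (n : ℝ) * trunc n (U ω)
          + ((n : ℝ) * trunc n (V ω) + (n : ℝ) * n)) μ := ((itrunc U hU).const_mul _).add i3
      have q1 : ∫ ω, (trunc n (U ω) * trunc n (V ω) + ((n : ℝ) * trunc n (U ω)
            + ((n : ℝ) * trunc n (V ω) + (n : ℝ) * n))) ∂μ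
          = ∫ ω, trunc n (U ω) * trunc n (V ω) ∂μ + ∫ ω, ((n : ℝ) * trunc n (U ω)
            + ((n : ℝ) * trunc n (V ω) + (n : ℝ) * n)) ∂μ :=
        integral_add (itrunc2 U V hU hV) i2
      have q2 : ∫ ω, ((n : ℝ) * trunc n (U ω) + ((n : ℝ) * trunc n (V ω) + (n : ℝ) * n)) ∂μ
          = ∫ ω, (n : ℝ) * trunc n (U ω) ∂μ
            + ∫ ω, ((n : ℝ) * trunc n (V ω) + (n : ℝ) * n) ∂μ :=
        integral_add ((itrunc U hU).const_mul _) i3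
      have q3 : ∫ ω, ((n : ℝ) * trunc n (V ω) + (n : ℝ) * n) ∂μ
          = ∫ ω, (n : ℝ) * trunc n (V ω) ∂μ + ∫ ω, ((n : ℝ) * n : ℝ) ∂μ :=
        integral_add ((itrunc V hV).const_mul _) (integrable_const _)
      have q4 : ∫ ω, (n : ℝ) * trunc n (U ω) ∂μ = (n : ℝ) * ∫ ω, trunc n (U ω) ∂μ :=
        integral_const_mul _ _
      have q5 : ∫ ω, (n : ℝ) * trunc n (V ω) ∂μ = (n : ℝ) * ∫ ω, trunc n (V ω) ∂μ :=
        integral_const_mul _ _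
      have q6 : ∫ _ω : Ω, ((n : ℝ) * n : ℝ) ∂μ = (n : ℝ) * n := by
        rw [integral_const]; simp
      rw [e0, q1, q2, q3, q4, q5, q6]
    have eA := expand X' Y' hX'm hY'm
    have eC := expand F' G' hF'm hG'm
    have tX : ∫ ω, trunc n (X' ω) ∂μ = ∫ ω, trunc n (F' ω) ∂μ := by
      calc ∫ ω, trunc n (X' ω) ∂μ = ∫ ω, trunc n (X ω) ∂μ :=
            (integral_congr_ae (hX'e.mono fun ω h => by
              show trunc n (X ω) = trunc n (X' ω); rw [h])).symm
        _ = ∫ ω, trunc n (f (Z ω)) ∂μ := intransferX n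
        _ = ∫ ω, trunc n (F' ω) ∂μ := integral_congr_ae (hF'e.mono fun ω h => by
              have h' : f (Z ω) = F' ω := h
              show trunc n (f (Z ω)) = trunc n (F' ω); rw [h'])
    have tY : ∫ ω, trunc n (Y' ω) ∂μ = ∫ ω, trunc n (G' ω) ∂μ := by
      calc ∫ ω, trunc n (Y' ω) ∂μ = ∫ ω, trunc n (Y ω) ∂μ :=
            (integral_congr_ae (hY'e.mono fun ω h => by
              show trunc n (Y ω) = trunc n (Y' ω); rw [h])).symm
        _ = ∫ ω, trunc n (g (Z ω)) ∂μ := intransferY n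
        _ = ∫ ω, trunc n (G' ω) ∂μ := integral_congr_ae (hG'e.mono fun ω h => by
              have h' : g (Z ω) = G' ω := h
              show trunc n (g (Z ω)) = trunc n (G' ω); rw [h'])
    have pX : ∫ ω, trunc n (X ω) * trunc n (Y ω) ∂μ
        = ∫ ω, trunc n (X' ω) * trunc n (Y' ω) ∂μ := by
      apply integral_congr_ae
      filter_upwards [hX'e, hY'e] with ω hx hy
      rw [hx, hy]
    have pC : ∫ ω, trunc n (f (Z ω)) * trunc n (g (Z ω)) ∂μ
        = ∫ ω, trunc n (F' ω) * trunc n (G' ω) ∂μ := by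
      apply integral_congr_ae
      filter_upwards [hF'e, hG'e] with ω hx hy
      have hx' : f (Z ω) = F' ω := hx
      have hy' : g (Z ω) = G' ω := hy
      rw [hx', hy']
    rw [pX, pC]
    rw [eA, eC, tX, tY] at hcore
    linarith
  -- pass to the limit
  have hmlim1 : Filter.Tendsto (fun n : ℕ => ∫ ω, trunc n (X ω) * trunc n (Y ω) ∂μ)
      Filter.atTop (nhds (∫ ω, X ω * Y ω ∂μ)) := by
    refine tendsto_integral_of_dominated_convergence (fun ω => |X ω * Y ω|)
      (fun n => (((trunc_meas n).comp_aemeasurable hXae).mul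
        ((trunc_meas n).comp_aemeasurable hYae)).aestronglyMeasurable) h1.abs
      (fun n => Filter.Eventually.of_forall fun ω => ?_)
      (Filter.Eventually.of_forall fun ω => ?_)
    · show ‖trunc n (X ω) * trunc n (Y ω)‖ ≤ |X ω * Y ω|
      rw [Real.norm_eq_abs, abs_mul, abs_mul]
      exact mul_le_mul (trunc_abs_le n _) (trunc_abs_le n _) (abs_nonneg _) (abs_nonneg _)
    · refine Filter.Tendsto.congr' ?_ tendsto_const_nhds
      filter_upwards [trunc_eventually (X ω), trunc_eventually (Y ω)] with n ha hb
      show X ω * Y ω = trunc n (X ω) * trunc n (Y ω)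
      rw [ha, hb]
  have hmlim2 : Filter.Tendsto (fun n : ℕ => ∫ ω, trunc n (f (Z ω)) * trunc n (g (Z ω)) ∂μ)
      Filter.atTop (nhds (∫ ω, f (Z ω) * g (Z ω) ∂μ)) := by
    refine tendsto_integral_of_dominated_convergence (fun ω => |f (Z ω) * g (Z ω)|)
      (fun n => (((trunc_meas n).comp_aemeasurable hFae).mul
        ((trunc_meas n).comp_aemeasurable hGae)).aestronglyMeasurable) h2.abs
      (fun n => Filter.Eventually.of_forall fun ω => ?_)
      (Filter.Eventually.of_forall fun ω => ?_)
    · show ‖trunc n (f (Z ω)) * trunc n (g (Z ω))‖ ≤ |f (Z ω) * g (Z ω)|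
      rw [Real.norm_eq_abs, abs_mul, abs_mul]
      exact mul_le_mul (trunc_abs_le n _) (trunc_abs_le n _) (abs_nonneg _) (abs_nonneg _)
    · refine Filter.Tendsto.congr' ?_ tendsto_const_nhds
      filter_upwards [trunc_eventually (f (Z ω)), trunc_eventually (g (Z ω))] with n ha hb
      show f (Z ω) * g (Z ω) = trunc n (f (Z ω)) * trunc n (g (Z ω))
      rw [ha, hb]
  exact le_of_tendsto_of_tendsto' hmlim1 hmlim2 stepn
end

section
/- Ridge regression is $m$-stable: for any distribution $P$ on $\mathbb{R}^d\times\mathbb{R}$ with $\|X\|_2\le B_X$ and $|Y|\le B_Y$ almost surely, and any $\lambda>0$, $m\ge 1$, the ridge regression algorithm satisfies $\max\{\beta^{\mathrm{out}}_{m,n},\beta^{\mathrm{in}}_{m,n}\} \le \frac{2B_X^2B_Y}{\lambda}\left(1+\frac{B_X^2}{\lambda}\right)\cdot\frac{m}{n+m}\cdot\left(\frac{1}{\sqrt m}+\frac{1}{\sqrt n}\right)$. -/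
set_option maxHeartbeats 1600000

open MeasureTheory ProbabilityTheory
open scoped RealInnerProductSpace

lemma quad_lin_zero {g q : ℝ} (hq : 0 ≤ q) (h : ∀ t : ℝ, 0 ≤ t * g + t ^ 2 * q) : g = 0 := by
  by_contra hg
  have h1 := h (-(g / (2 * (q + 1))))
  have hq1 : 0 < q + 1 := by linarith
  have h2 : 0 ≤ (-(g / (2 * (q + 1))) * g + (-(g / (2 * (q + 1)))) ^ 2 * q) * (4 * (q + 1) ^ 2) :=
    mul_nonneg h1 (by positivity)
  have h3 : (-(g / (2 * (q + 1))) * g + (-(g / (2 * (q + 1)))) ^ 2 * q) * (4 * (q + 1) ^ 2)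
      = g ^ 2 * (q - 2 * (q + 1)) := by
    field_simp
    ring
  rw [h3] at h2
  have : 0 < g ^ 2 := by positivity
  nlinarith

lemma ridge_norm_bound {d k : ℕ} (hk1 : 1 ≤ k) {x : Fin k → EuclideanSpace ℝ (Fin d)} {y : Fin k → ℝ}
    {BX BY lam : ℝ} (hlam : 0 < lam) (hBX : 0 ≤ BX) (hBY : 0 ≤ BY)
    (hx : ∀ i, ‖x i‖ ≤ BX) (hy : ∀ i, |y i| ≤ BY)
    {θs : EuclideanSpace ℝ (Fin d)}
    (hmin : ∀ θ, (k : ℝ)⁻¹ * ∑ i, (y i - ⟪x i, θs⟫) ^ 2 + lam * ‖θs‖ ^ 2 ≤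
      (k : ℝ)⁻¹ * ∑ i, (y i - ⟪x i, θ⟫) ^ 2 + lam * ‖θ‖ ^ 2) :
    lam * ‖θs‖ ≤ BX * BY := by
  have hkpos : (0:ℝ) < k := by exact_mod_cast hk1
  have hk : (0:ℝ) ≤ (k : ℝ)⁻¹ := by positivity
  set g : ℝ := (k : ℝ)⁻¹ * ∑ i, (-2 * (y i - ⟪x i, θs⟫) * ⟪x i, θs⟫) + lam * (2 * ⟪θs, θs⟫) with hg
  set q : ℝ := (k : ℝ)⁻¹ * ∑ i, ⟪x i, θs⟫ ^ 2 + lam * ‖θs‖ ^ 2 with hqdef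
  have hq : 0 ≤ q := by positivity
  have hzero : g = 0 := by
    apply quad_lin_zero hq
    intro t
    have h1 := hmin (θs + t • θs)
    have hexp : ∀ i : Fin k, (y i - ⟪x i, θs + t • θs⟫) ^ 2 =
        (y i - ⟪x i, θs⟫) ^ 2 + t * (-2 * (y i - ⟪x i, θs⟫) * ⟪x i, θs⟫) + t ^ 2 * ⟪x i, θs⟫ ^ 2 := by
      intro i
      rw [inner_add_right, real_inner_smul_right]
      ring
    have hnorm : ‖θs + t • θs‖ ^ 2 = ‖θs‖ ^ 2 + t * (2 * ⟪θs, θs⟫) + t ^ 2 * ‖θs‖ ^ 2 := by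
      rw [norm_add_sq_real, real_inner_smul_right, norm_smul]
      simp only [mul_pow, Real.norm_eq_abs, sq_abs]
      ring
    rw [Finset.sum_congr rfl (fun i _ => hexp i), hnorm] at h1
    simp only [Finset.sum_add_distrib, ← Finset.mul_sum] at h1
    rw [hg, hqdef]
    nlinarith [h1]
  have key : lam * ‖θs‖ ^ 2 ≤ BX * BY * ‖θs‖ := by
    have hip : lam * (2 * ⟪θs, θs⟫) = 2 * (lam * ‖θs‖ ^ 2) := by
      rw [real_inner_self_eq_norm_sq]; ring
    have hsplit : (k : ℝ)⁻¹ * ∑ i, (-2 * (y i - ⟪x i, θs⟫) * ⟪x i, θs⟫) =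
        -2 * ((k : ℝ)⁻¹ * ∑ i, ((y i - ⟪x i, θs⟫) * ⟪x i, θs⟫)) := by
      rw [Finset.mul_sum, Finset.mul_sum, Finset.mul_sum]
      exact Finset.sum_congr rfl (fun i _ => by ring)
    rw [hg, hip, hsplit] at hzero
    have h2 : lam * ‖θs‖ ^ 2 = (k : ℝ)⁻¹ * ∑ i, ((y i - ⟪x i, θs⟫) * ⟪x i, θs⟫) := by linarith
    have h3 : ∀ i : Fin k, (y i - ⟪x i, θs⟫) * ⟪x i, θs⟫ ≤ BX * BY * ‖θs‖ := by
      intro i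
      have hcs := abs_real_inner_le_norm (x i) θs
      have h5 : |y i| * |⟪x i, θs⟫| ≤ BY * (BX * ‖θs‖) :=
        mul_le_mul (hy i) (hcs.trans (mul_le_mul_of_nonneg_right (hx i) (norm_nonneg _)))
          (abs_nonneg _) hBY
      have h4 : y i * ⟪x i, θs⟫ ≤ BX * BY * ‖θs‖ := by
        calc y i * ⟪x i, θs⟫ ≤ |y i * ⟪x i, θs⟫| := le_abs_self _
        _ = |y i| * |⟪x i, θs⟫| := abs_mul _ _
        _ ≤ BY * (BX * ‖θs‖) := h5
        _ = BX * BY * ‖θs‖ := by ring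
      nlinarith [sq_nonneg (⟪x i, θs⟫)]
    have h6 : ∑ i, ((y i - ⟪x i, θs⟫) * ⟪x i, θs⟫) ≤ (k : ℝ) * (BX * BY * ‖θs‖) := by
      calc ∑ i, ((y i - ⟪x i, θs⟫) * ⟪x i, θs⟫) ≤ ∑ _i : Fin k, BX * BY * ‖θs‖ :=
          Finset.sum_le_sum (fun i _ => h3 i)
      _ = (k : ℝ) * (BX * BY * ‖θs‖) := by simp [Finset.sum_const, mul_comm]
    have h7 : (k : ℝ)⁻¹ * ∑ i, ((y i - ⟪x i, θs⟫) * ⟪x i, θs⟫) ≤ BX * BY * ‖θs‖ := by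
      have := mul_le_mul_of_nonneg_left h6 hk
      rwa [← mul_assoc, inv_mul_cancel₀ (ne_of_gt hkpos), one_mul] at this
    linarith [h2 ▸ h7]
  rcases eq_or_lt_of_le (norm_nonneg θs) with h0 | h0
  · rw [← h0, mul_zero]; positivity
  · nlinarith [key, h0]

lemma ridge_gap {d k : ℕ} {x : Fin k → EuclideanSpace ℝ (Fin d)} {y : Fin k → ℝ}
    {lam : ℝ} (hlam : 0 < lam) {θs : EuclideanSpace ℝ (Fin d)}
    (hmin : ∀ θ, (k : ℝ)⁻¹ * ∑ i, (y i - ⟪x i, θs⟫) ^ 2 + lam * ‖θs‖ ^ 2 ≤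
      (k : ℝ)⁻¹ * ∑ i, (y i - ⟪x i, θ⟫) ^ 2 + lam * ‖θ‖ ^ 2) :
    ∀ θ, (k : ℝ)⁻¹ * ∑ i, (y i - ⟪x i, θs⟫) ^ 2 + lam * ‖θs‖ ^ 2 + lam / 2 * ‖θ - θs‖ ^ 2 ≤
      (k : ℝ)⁻¹ * ∑ i, (y i - ⟪x i, θ⟫) ^ 2 + lam * ‖θ‖ ^ 2 := by
  intro θ
  have hk : (0:ℝ) ≤ (k : ℝ)⁻¹ := by positivity
  have h1 := hmin ((1/2 : ℝ) • (θ + θs))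
  have hsum : ∑ i, (y i - ⟪x i, (1/2 : ℝ) • (θ + θs)⟫) ^ 2 ≤
      ∑ i, (((y i - ⟪x i, θ⟫) ^ 2 + (y i - ⟪x i, θs⟫) ^ 2) / 2) := by
    refine Finset.sum_le_sum (fun i _ => ?_)
    rw [real_inner_smul_right, inner_add_right]
    nlinarith [sq_nonneg (⟪x i, θ⟫ - ⟪x i, θs⟫)]
  have hnorm : ‖(1/2 : ℝ) • (θ + θs)‖ ^ 2 =
      (‖θ‖ ^ 2 + ‖θs‖ ^ 2) / 2 - ‖θ - θs‖ ^ 2 / 4 := by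
    have hpar := parallelogram_law_with_norm ℝ θ θs
    have : ‖(1/2 : ℝ) • (θ + θs)‖ ^ 2 = (1/4) * ‖θ + θs‖ ^ 2 := by
      rw [norm_smul]
      simp only [mul_pow, Real.norm_eq_abs, sq_abs]
      ring
    rw [this]
    nlinarith [hpar]
  have h2 : (k : ℝ)⁻¹ * ∑ i, (y i - ⟪x i, (1/2 : ℝ) • (θ + θs)⟫) ^ 2 ≤
      (k : ℝ)⁻¹ * ∑ i, (((y i - ⟪x i, θ⟫) ^ 2 + (y i - ⟪x i, θs⟫) ^ 2) / 2) :=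
    mul_le_mul_of_nonneg_left hsum hk
  have h3 : (k : ℝ)⁻¹ * ∑ i, (((y i - ⟪x i, θ⟫) ^ 2 + (y i - ⟪x i, θs⟫) ^ 2) / 2) =
      ((k : ℝ)⁻¹ * ∑ i, (y i - ⟪x i, θ⟫) ^ 2 + (k : ℝ)⁻¹ * ∑ i, (y i - ⟪x i, θs⟫) ^ 2) / 2 := by
    rw [← Finset.sum_div, Finset.sum_add_distrib]
    ring
  rw [hnorm] at h1
  rw [h3] at h2
  linarith [h1, h2]

noncomputable def tens {d : ℕ} (a b : EuclideanSpace ℝ (Fin d)) :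
    EuclideanSpace ℝ (Fin d × Fin d) :=
  (WithLp.equiv 2 _).symm (fun p => a p.1 * b p.2)

lemma tens_apply {d : ℕ} (a b : EuclideanSpace ℝ (Fin d)) (p : Fin d × Fin d) :
    tens a b p = a p.1 * b p.2 := rfl

lemma inner_tens {d : ℕ} (a b c e : EuclideanSpace ℝ (Fin d)) :
    ⟪tens a b, tens c e⟫ = ⟪a, c⟫ * ⟪b, e⟫ := by
  simp only [PiLp.inner_apply, RCLike.inner_apply, conj_trivial, tens_apply]
  rw [Fintype.sum_prod_type, Finset.sum_mul_sum]
  exact Finset.sum_congr rfl (fun i _ => Finset.sum_congr rfl (fun j _ => by ring))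

lemma norm_tens {d : ℕ} (a b : EuclideanSpace ℝ (Fin d)) : ‖tens a b‖ = ‖a‖ * ‖b‖ := by
  have h1 : ‖tens a b‖ * ‖tens a b‖ = (‖a‖ * ‖b‖) * (‖a‖ * ‖b‖) := by
    rw [← real_inner_self_eq_norm_mul_norm, inner_tens,
      real_inner_self_eq_norm_mul_norm, real_inner_self_eq_norm_mul_norm]
    ring
  nlinarith [norm_nonneg (tens a b), norm_nonneg a, norm_nonneg b,
    mul_nonneg (norm_nonneg a) (norm_nonneg b)]



lemma measurable_tens {d : ℕ} : Measurable (fun a : EuclideanSpace ℝ (Fin d) => tens a a) := by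
  have h : Measurable fun a : EuclideanSpace ℝ (Fin d) => (fun p : Fin d × Fin d => a p.1 * a p.2) := by
    apply measurable_pi_lambda
    intro p
    exact ((measurable_pi_apply p.1).comp (MeasurableEquiv.toLp 2 (Fin d → ℝ)).symm.measurable).mul
      ((measurable_pi_apply p.2).comp (MeasurableEquiv.toLp 2 (Fin d → ℝ)).symm.measurable)
  exact (MeasurableEquiv.toLp 2 (Fin d × Fin d → ℝ)).measurable.comp h

lemma det_main {d n m : ℕ} (hn : 1 ≤ n) (hm : 1 ≤ m) {BX BY lam : ℝ}
    (hlam : 0 < lam) (hBX : 0 ≤ BX) (hBY : 0 ≤ BY)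
    {x : Fin (n + m) → EuclideanSpace ℝ (Fin d)} {y : Fin (n + m) → ℝ}
    (hx : ∀ i, ‖x i‖ ≤ BX) (hy : ∀ i, |y i| ≤ BY)
    {θN θNM : EuclideanSpace ℝ (Fin d)}
    (hminN : ∀ θ, (n : ℝ)⁻¹ * ∑ i : Fin n,
        (y (i.castAdd m) - ⟪x (i.castAdd m), θN⟫) ^ 2 + lam * ‖θN‖ ^ 2 ≤
      (n : ℝ)⁻¹ * ∑ i : Fin n, (y (i.castAdd m) - ⟪x (i.castAdd m), θ⟫) ^ 2 + lam * ‖θ‖ ^ 2)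
    (hminNM : ∀ θ, ((n + m : ℕ) : ℝ)⁻¹ * ∑ i : Fin (n + m),
        (y i - ⟪x i, θNM⟫) ^ 2 + lam * ‖θNM‖ ^ 2 ≤
      ((n + m : ℕ) : ℝ)⁻¹ * ∑ i : Fin (n + m), (y i - ⟪x i, θ⟫) ^ 2 + lam * ‖θ‖ ^ 2) :
    lam * ‖θN - θNM‖ ≤ (m : ℝ) / ((n : ℝ) + m) *
      (2 * ‖(n : ℝ)⁻¹ • ∑ i : Fin n, y (i.castAdd m) • x (i.castAdd m) -
            (m : ℝ)⁻¹ • ∑ i : Fin m, y (i.natAdd n) • x (i.natAdd n)‖ +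
        2 * BX * BY / lam *
          ‖(n : ℝ)⁻¹ • ∑ i : Fin n, tens (x (i.castAdd m)) (x (i.castAdd m)) -
            (m : ℝ)⁻¹ • ∑ i : Fin m, tens (x (i.natAdd n)) (x (i.natAdd n))‖) := by
  have hnpos : (0:ℝ) < n := by exact_mod_cast hn
  have hmpos : (0:ℝ) < m := by exact_mod_cast hm
  set Δ := θN - θNM with hΔ
  set s := θN + θNM with hs
  set bvec := (n : ℝ)⁻¹ • ∑ i : Fin n, y (i.castAdd m) • x (i.castAdd m) -
      (m : ℝ)⁻¹ • ∑ i : Fin m, y (i.natAdd n) • x (i.natAdd n) with hbvec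
  set Avec := (n : ℝ)⁻¹ • ∑ i : Fin n, tens (x (i.castAdd m)) (x (i.castAdd m)) -
      (m : ℝ)⁻¹ • ∑ i : Fin m, tens (x (i.natAdd n)) (x (i.natAdd n)) with hAvec
  -- the two optimality gaps
  have gapN := ridge_gap hlam hminN θNM
  have gapNM := ridge_gap hlam hminNM θN
  have hrev : ‖θNM - θN‖ = ‖Δ‖ := norm_sub_rev _ _
  rw [hrev] at gapN
  -- sum of gaps
  have hsum : lam * ‖Δ‖ ^ 2 ≤
      ((n : ℝ)⁻¹ * ∑ i : Fin n, (y (i.castAdd m) - ⟪x (i.castAdd m), θNM⟫) ^ 2 -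
       (n : ℝ)⁻¹ * ∑ i : Fin n, (y (i.castAdd m) - ⟪x (i.castAdd m), θN⟫) ^ 2) +
      (((n + m : ℕ) : ℝ)⁻¹ * ∑ i : Fin (n + m), (y i - ⟪x i, θN⟫) ^ 2 -
       ((n + m : ℕ) : ℝ)⁻¹ * ∑ i : Fin (n + m), (y i - ⟪x i, θNM⟫) ^ 2) := by
    linarith [gapN, gapNM]
  -- rewrite RHS via the per-sample differences
  set D : Fin (n + m) → ℝ := fun i => (y i - ⟪x i, θNM⟫) ^ 2 - (y i - ⟪x i, θN⟫) ^ 2 with hDdef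
  have hsplitsum : ∀ θ : EuclideanSpace ℝ (Fin d),
      ∑ i : Fin (n + m), (y i - ⟪x i, θ⟫) ^ 2 =
      ∑ i : Fin n, (y (i.castAdd m) - ⟪x (i.castAdd m), θ⟫) ^ 2 +
      ∑ i : Fin m, (y (i.natAdd n) - ⟪x (i.natAdd n), θ⟫) ^ 2 := fun θ =>
    Fin.sum_univ_add (fun i => (y i - ⟪x i, θ⟫) ^ 2)
  have hSA : ∑ i : Fin n, D (i.castAdd m) =
      ∑ i : Fin n, (y (i.castAdd m) - ⟪x (i.castAdd m), θNM⟫) ^ 2 -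
      ∑ i : Fin n, (y (i.castAdd m) - ⟪x (i.castAdd m), θN⟫) ^ 2 := by
    rw [← Finset.sum_sub_distrib]
  have hSB : ∑ i : Fin m, D (i.natAdd n) =
      ∑ i : Fin m, (y (i.natAdd n) - ⟪x (i.natAdd n), θNM⟫) ^ 2 -
      ∑ i : Fin m, (y (i.natAdd n) - ⟪x (i.natAdd n), θN⟫) ^ 2 := by
    rw [← Finset.sum_sub_distrib]
  have hnm : ((n + m : ℕ) : ℝ) = (n : ℝ) + m := by push_cast; ring
  have hmain : lam * ‖Δ‖ ^ 2 ≤ (m : ℝ) / ((n : ℝ) + m) *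
      ((n : ℝ)⁻¹ * ∑ i : Fin n, D (i.castAdd m) - (m : ℝ)⁻¹ * ∑ i : Fin m, D (i.natAdd n)) := by
    have e1 : (m : ℝ) / ((n : ℝ) + m) *
        ((n : ℝ)⁻¹ * ∑ i : Fin n, D (i.castAdd m) - (m : ℝ)⁻¹ * ∑ i : Fin m, D (i.natAdd n)) =
        ((n : ℝ)⁻¹ - (((n : ℝ) + m))⁻¹) * ∑ i : Fin n, D (i.castAdd m) -
        (((n : ℝ) + m))⁻¹ * ∑ i : Fin m, D (i.natAdd n) := by
      field_simp
      ring
    rw [e1, hSA, hSB]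
    calc lam * ‖Δ‖ ^ 2 ≤ _ := hsum
    _ = _ := by
      rw [hsplitsum θN, hsplitsum θNM, hnm]
      field_simp
      ring
  -- identify the bracket with inner products
  have hD : ∀ i : Fin (n + m), D i = 2 * ⟪y i • x i, Δ⟫ - ⟪tens (x i) (x i), tens s Δ⟫ := by
    intro i
    rw [hDdef]
    simp only []
    rw [inner_tens, real_inner_smul_left, hΔ, hs, inner_sub_right, inner_add_right]
    ring
  have hbr : (n : ℝ)⁻¹ * ∑ i : Fin n, D (i.castAdd m) - (m : ℝ)⁻¹ * ∑ i : Fin m, D (i.natAdd n) =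
      2 * ⟪bvec, Δ⟫ - ⟪Avec, tens s Δ⟫ := by
    rw [hbvec, hAvec, inner_sub_left, inner_sub_left, real_inner_smul_left, real_inner_smul_left,
      real_inner_smul_left, real_inner_smul_left, sum_inner, sum_inner, sum_inner, sum_inner]
    rw [Finset.sum_congr rfl (fun (i : Fin n) _ => hD (i.castAdd m)),
      Finset.sum_congr rfl (fun (i : Fin m) _ => hD (i.natAdd n))]
    rw [Finset.sum_sub_distrib, Finset.sum_sub_distrib, ← Finset.mul_sum, ← Finset.mul_sum]
    ring
  -- norm bounds on the minimizers
  have hnormN : lam * ‖θN‖ ≤ BX * BY :=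
    ridge_norm_bound hn hlam hBX hBY (fun i => hx _) (fun i => hy _) hminN
  have hnormNM : lam * ‖θNM‖ ≤ BX * BY :=
    ridge_norm_bound (by omega) hlam hBX hBY (fun i => hx _) (fun i => hy _) hminNM
  have hsnorm : ‖s‖ ≤ 2 * BX * BY / lam := by
    calc ‖s‖ ≤ ‖θN‖ + ‖θNM‖ := norm_add_le _ _
    _ ≤ BX * BY / lam + BX * BY / lam := by
      have h1 : ‖θN‖ ≤ BX * BY / lam := (le_div_iff₀ hlam).2 (by linarith [hnormN])
      have h2 : ‖θNM‖ ≤ BX * BY / lam := (le_div_iff₀ hlam).2 (by linarith [hnormNM])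
      linarith
    _ = 2 * BX * BY / lam := by ring
  -- Cauchy–Schwarz bounds
  have hc1 : ⟪bvec, Δ⟫ ≤ ‖bvec‖ * ‖Δ‖ := real_inner_le_norm _ _
  have hc2 : -⟪Avec, tens s Δ⟫ ≤ ‖Avec‖ * (2 * BX * BY / lam * ‖Δ‖) := by
    calc -⟪Avec, tens s Δ⟫ ≤ ‖Avec‖ * ‖tens s Δ‖ := by
          have h := abs_real_inner_le_norm Avec (tens s Δ)
          linarith [neg_abs_le (⟪Avec, tens s Δ⟫)]
    _ = ‖Avec‖ * (‖s‖ * ‖Δ‖) := by rw [norm_tens]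
    _ ≤ ‖Avec‖ * (2 * BX * BY / lam * ‖Δ‖) := by
        exact mul_le_mul_of_nonneg_left
          (mul_le_mul_of_nonneg_right hsnorm (norm_nonneg _)) (norm_nonneg _)
  have hfrac : (0:ℝ) ≤ (m : ℝ) / ((n : ℝ) + m) := by positivity
  have hK : lam * ‖Δ‖ ^ 2 ≤ (m : ℝ) / ((n : ℝ) + m) *
      ((2 * ‖bvec‖ + 2 * BX * BY / lam * ‖Avec‖) * ‖Δ‖) := by
    calc lam * ‖Δ‖ ^ 2 ≤ _ := hmain
    _ = (m : ℝ) / ((n : ℝ) + m) * (2 * ⟪bvec, Δ⟫ - ⟪Avec, tens s Δ⟫) := by rw [hbr]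
    _ ≤ _ := by
        apply mul_le_mul_of_nonneg_left _ hfrac
        nlinarith [hc1, hc2]
  have hKnn : (0:ℝ) ≤ 2 * ‖bvec‖ + 2 * BX * BY / lam * ‖Avec‖ := by positivity
  rcases eq_or_lt_of_le (norm_nonneg Δ) with h0 | h0
  · rw [← h0, mul_zero]
    positivity
  · nlinarith [hK, h0]

lemma conc {Ω : Type*} [MeasurableSpace Ω] {μ : Measure Ω} [IsProbabilityMeasure μ]
    {ι : Type*} [Fintype ι] {k : ℕ} (hk : 1 ≤ k)
    (V : Fin k → Ω → EuclideanSpace ℝ ι)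
    (hVmeas : ∀ i, Measurable (V i))
    (hind : ∀ i j : Fin k, i ≠ j → IndepFun (V i) (V j) μ)
    {C : ℝ} (hC : ∀ i, ∀ᵐ ω ∂μ, ‖V i ω‖ ≤ C)
    {β : EuclideanSpace ℝ ι} (hβ : ∀ i, ∫ ω, V i ω ∂μ = β) :
    ∫ ω, ‖(k : ℝ)⁻¹ • ∑ i, V i ω - β‖ ∂μ ≤ C / Real.sqrt k := by
  have hμne : μ ≠ 0 := IsProbabilityMeasure.ne_zero μ
  haveI : (MeasureTheory.ae μ).NeBot := ae_neBot.2 hμne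
  have hC0 : 0 ≤ C := by
    obtain ⟨ω, hω⟩ := (hC ⟨0, hk⟩).exists
    exact le_trans (norm_nonneg _) hω
  have hkpos : (0:ℝ) < k := by exact_mod_cast hk
  -- the centered average
  set S : Ω → EuclideanSpace ℝ ι := fun ω => (k : ℝ)⁻¹ • ∑ i, V i ω - β with hS
  have hsummeas : Measurable (fun ω => ∑ i, V i ω) := Finset.measurable_sum _ (fun i _ => hVmeas i)
  have hSmeas : Measurable S := (hsummeas.const_smul ((k:ℝ)⁻¹)).sub (measurable_const (a := β))
  have hVbd : ∀ᵐ ω ∂μ, ∀ i, ‖V i ω‖ ≤ C := (ae_all_iff).2 hC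
  have hSbd : ∀ᵐ ω ∂μ, ‖S ω‖ ≤ C + ‖β‖ := by
    filter_upwards [hVbd] with ω hω
    have h1 : ‖(k : ℝ)⁻¹ • ∑ i, V i ω‖ ≤ C := by
      rw [norm_smul]
      have h2 : ‖∑ i, V i ω‖ ≤ (k : ℝ) * C := by
        calc ‖∑ i, V i ω‖ ≤ ∑ i, ‖V i ω‖ := norm_sum_le _ _
        _ ≤ ∑ _i : Fin k, C := Finset.sum_le_sum (fun i _ => hω i)
        _ = (k : ℝ) * C := by simp [mul_comm]
      calc ‖(k:ℝ)⁻¹‖ * ‖∑ i, V i ω‖ = (k:ℝ)⁻¹ * ‖∑ i, V i ω‖ := by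
            rw [Real.norm_eq_abs, abs_of_pos (by positivity)]
      _ ≤ (k:ℝ)⁻¹ * ((k:ℝ) * C) := mul_le_mul_of_nonneg_left h2 (by positivity)
      _ = C := by field_simp
    calc ‖S ω‖ ≤ ‖(k : ℝ)⁻¹ • ∑ i, V i ω‖ + ‖β‖ := norm_sub_le _ _
    _ ≤ C + ‖β‖ := by linarith
  -- integrability facts
  have hVint : ∀ i, Integrable (V i) μ := fun i =>
    memLp_one_iff_integrable.1 (MemLp.of_bound (hVmeas i).aestronglyMeasurable C (hC i))
  -- coordinates
  have hcoordmeas : ∀ (i : Fin k) (j : ι), Measurable (fun ω => V i ω j) := fun i j =>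
    ((measurable_pi_apply j).comp (MeasurableEquiv.toLp 2 (ι → ℝ)).symm.measurable).comp (hVmeas i)
  have hcoordbd : ∀ (i : Fin k) (j : ι), ∀ᵐ ω ∂μ, |V i ω j| ≤ C := by
    intro i j
    filter_upwards [hC i] with ω hω
    calc |V i ω j| ≤ ‖V i ω‖ := by
          rw [EuclideanSpace.norm_eq]
          have : |V i ω j| = Real.sqrt (|V i ω j| ^ 2) := by
            rw [Real.sqrt_sq (abs_nonneg _)]
          rw [this]
          apply Real.sqrt_le_sqrt
          have h3 : V i ω j ^ 2 = ‖V i ω j‖ ^ 2 := by rw [Real.norm_eq_abs, sq_abs]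
          rw [sq_abs, h3]
          exact Finset.single_le_sum (f := fun j' => ‖V i ω j'‖ ^ 2)
            (fun j' _ => by positivity) (Finset.mem_univ j)
    _ ≤ C := hω
  have hcoordmem2 : ∀ (i : Fin k) (j : ι), MemLp (fun ω => V i ω j) 2 μ := fun i j =>
    MemLp.of_bound (hcoordmeas i j).aestronglyMeasurable C
      (by filter_upwards [hcoordbd i j] with ω h using by rwa [Real.norm_eq_abs])
  -- mean of coordinates
  have hmeancoord : ∀ (i : Fin k) (j : ι), ∫ ω, V i ω j ∂μ = β j := by
    intro i j
    have := (EuclideanSpace.proj j : EuclideanSpace ℝ ι →L[ℝ] ℝ).integral_comp_comm (hVint i)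
    simpa [hβ i] using this
  -- coordinate expansion of squared norms
  have hnorm_sq : ∀ (W : Ω → EuclideanSpace ℝ ι) (ω : Ω), ‖W ω‖ ^ 2 = ∑ j, (W ω j) ^ 2 := by
    intro W ω
    rw [EuclideanSpace.norm_eq, Real.sq_sqrt (by positivity)]
    exact Finset.sum_congr rfl (fun j _ => by rw [Real.norm_eq_abs, sq_abs])
  have hsumcoord : ∀ (ω : Ω) (j : ι), (∑ i, V i ω) j = ∑ i, V i ω j := by
    intro ω j
    induction (Finset.univ : Finset (Fin k)) using Finset.induction_on with
    | empty => simp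
    | @insert a s h ih => rw [Finset.sum_insert h, Finset.sum_insert h, PiLp.add_apply, ih]
  set Zc : ι → Ω → ℝ := fun j ω => (k : ℝ)⁻¹ * ∑ i, V i ω j with hZc
  have hScoord : ∀ (ω : Ω) (j : ι), S ω j = Zc j ω - β j := by
    intro ω j
    rw [hS]
    simp only [PiLp.sub_apply, PiLp.smul_apply, smul_eq_mul, hZc, hsumcoord]
  have hZmeas : ∀ j, Measurable (Zc j) :=
    fun j => (Finset.measurable_sum _ (fun i _ => hcoordmeas i j)).const_mul _
  have hZbd : ∀ j, ∀ᵐ ω ∂μ, |Zc j ω| ≤ C := by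
    intro j
    filter_upwards [hVbd] with ω hω
    rw [hZc]
    simp only []
    rw [abs_mul, abs_of_pos (show (0:ℝ) < (k:ℝ)⁻¹ by positivity)]
    have h1 : |∑ i, V i ω j| ≤ (k : ℝ) * C := by
      calc |∑ i, V i ω j| ≤ ∑ i, |V i ω j| := Finset.abs_sum_le_sum_abs _ _
      _ ≤ ∑ _i : Fin k, C := Finset.sum_le_sum (fun i _ => by
          calc |V i ω j| ≤ ‖V i ω‖ := by
                rw [EuclideanSpace.norm_eq]
                rw [show |V i ω j| = Real.sqrt (|V i ω j| ^ 2) by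
                  rw [Real.sqrt_sq (abs_nonneg _)]]
                apply Real.sqrt_le_sqrt
                rw [sq_abs, show V i ω j ^ 2 = ‖V i ω j‖ ^ 2 by rw [Real.norm_eq_abs, sq_abs]]
                exact Finset.single_le_sum (f := fun j' => ‖V i ω j'‖ ^ 2)
                  (fun j' _ => by positivity) (Finset.mem_univ j)
          _ ≤ C := hω i)
      _ = (k : ℝ) * C := by simp [mul_comm]
    calc (k:ℝ)⁻¹ * |∑ i, V i ω j| ≤ (k:ℝ)⁻¹ * ((k:ℝ) * C) :=
        mul_le_mul_of_nonneg_left h1 (by positivity)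
    _ = C := by field_simp
  have hZmem2 : ∀ j, MemLp (Zc j) 2 μ := fun j =>
    MemLp.of_bound (hZmeas j).aestronglyMeasurable C
      (by filter_upwards [hZbd j] with ω h using by rwa [Real.norm_eq_abs])
  have hZint : ∀ j, Integrable (Zc j) μ :=
    fun j => memLp_one_iff_integrable.1 (MemLp.of_bound (hZmeas j).aestronglyMeasurable C
      (by filter_upwards [hZbd j] with ω h using by rwa [Real.norm_eq_abs]))
  have hcoordint : ∀ (i : Fin k) (j : ι), Integrable (fun ω => V i ω j) μ := fun i j =>
    memLp_one_iff_integrable.1 (MemLp.of_bound (hcoordmeas i j).aestronglyMeasurable C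
      (by filter_upwards [hcoordbd i j] with ω h using by rwa [Real.norm_eq_abs]))
  have hZmean : ∀ j, ∫ ω, Zc j ω ∂μ = β j := by
    intro j
    rw [hZc]
    simp only []
    rw [MeasureTheory.integral_const_mul, MeasureTheory.integral_finset_sum _
      (fun i _ => hcoordint i j)]
    rw [Finset.sum_congr rfl (fun i _ => hmeancoord i j)]
    simp
    field_simp
  -- squared coordinate of S integrates to the variance of Zc j
  have hSj2int : ∀ j, Integrable (fun ω => (S ω j) ^ 2) μ := by
    intro j
    refine memLp_one_iff_integrable.1 (MemLp.of_bound ?_ ((C + |β j|) ^ 2) ?_)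
    · exact (((hZmeas j).sub (measurable_const (a := β j))).pow_const 2).aestronglyMeasurable.congr
        (by filter_upwards [] with ω; rw [hScoord ω j]; rfl)
    · filter_upwards [hZbd j] with ω h
      rw [Real.norm_eq_abs, abs_of_nonneg (sq_nonneg _), hScoord ω j]
      have : |Zc j ω - β j| ≤ C + |β j| := by
        calc |Zc j ω - β j| ≤ |Zc j ω| + |β j| := abs_sub _ _
        _ ≤ C + |β j| := by linarith
      calc (Zc j ω - β j) ^ 2 = |Zc j ω - β j| ^ 2 := by rw [sq_abs]
      _ ≤ (C + |β j|) ^ 2 := by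
          apply pow_le_pow_left₀ (abs_nonneg _) this
  have hvarS : ∀ j, ∫ ω, (S ω j) ^ 2 ∂μ = variance (Zc j) μ := by
    intro j
    have he : (fun ω => (S ω j) ^ 2) =
        fun ω => (Zc j ω) ^ 2 - 2 * β j * Zc j ω + (β j) ^ 2 := by
      funext ω; rw [hScoord ω j]; ring
    have hZ2int : Integrable (fun ω => (Zc j ω) ^ 2) μ :=
      memLp_one_iff_integrable.1 (MemLp.of_bound ((hZmeas j).pow_const 2).aestronglyMeasurable
        (C ^ 2) (by filter_upwards [hZbd j] with ω h
                    rw [Real.norm_eq_abs, abs_of_nonneg (sq_nonneg _)]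
                    calc (Zc j ω) ^ 2 = |Zc j ω| ^ 2 := by rw [sq_abs]
                    _ ≤ C ^ 2 := pow_le_pow_left₀ (abs_nonneg _) h 2))
    have hmulint : Integrable (fun ω => 2 * β j * Zc j ω) μ := (hZint j).const_mul _
    have hsubint : Integrable (fun ω => (Zc j ω) ^ 2 - 2 * β j * Zc j ω) μ := hZ2int.sub hmulint
    rw [he, integral_add hsubint (integrable_const _),
      integral_sub hZ2int hmulint, MeasureTheory.integral_const_mul, hZmean j,
      variance_eq_sub (hZmem2 j)]
    simp only [Pi.pow_apply, integral_const, measure_univ, probReal_univ, ENNReal.toReal_one, smul_eq_mul,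
      one_mul]
    rw [hZmean j]
    ring
  -- variance of the averaged coordinate
  have hvarZ : ∀ j, variance (Zc j) μ ≤ (k : ℝ)⁻¹ ^ 2 * ∑ i, ∫ ω, (V i ω j) ^ 2 ∂μ := by
    intro j
    have hfun : Zc j = (k : ℝ)⁻¹ • (∑ i, fun ω => V i ω j) := by
      funext ω
      simp only [hZc, Pi.smul_apply, smul_eq_mul, Finset.sum_apply]
    rw [hfun, variance_smul]
    have hvs : variance (∑ i, fun ω => V i ω j) μ = ∑ i, variance (fun ω => V i ω j) μ := by
      apply IndepFun.variance_sum (fun i _ => hcoordmem2 i j)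
      intro i _ i' _ hne
      exact (hind i i' hne).comp
        ((measurable_pi_apply j).comp (MeasurableEquiv.toLp 2 (ι → ℝ)).symm.measurable)
        ((measurable_pi_apply j).comp (MeasurableEquiv.toLp 2 (ι → ℝ)).symm.measurable)
    rw [hvs]
    apply mul_le_mul_of_nonneg_left _ (by positivity)
    apply Finset.sum_le_sum
    intro i _
    have h := variance_le_expectation_sq (μ := μ) (hcoordmeas i j).aestronglyMeasurable
    simpa using h
  -- integrability of squared coordinates of V
  have hVsqint : ∀ (i : Fin k) (j : ι), Integrable (fun ω => (V i ω j) ^ 2) μ := by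
    intro i j
    refine memLp_one_iff_integrable.1 (MemLp.of_bound
      ((hcoordmeas i j).pow_const 2).aestronglyMeasurable (C ^ 2) ?_)
    filter_upwards [hcoordbd i j] with ω h
    rw [Real.norm_eq_abs, abs_of_nonneg (sq_nonneg _), ← sq_abs]
    exact pow_le_pow_left₀ (abs_nonneg _) h 2
  have hVnormsqint : ∀ i : Fin k, Integrable (fun ω => ‖V i ω‖ ^ 2) μ := by
    intro i
    refine memLp_one_iff_integrable.1 (MemLp.of_bound
      ((hVmeas i).norm.pow_const 2).aestronglyMeasurable (C ^ 2) ?_)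
    filter_upwards [hC i] with ω h
    rw [Real.norm_eq_abs, abs_of_nonneg (sq_nonneg _)]
    exact pow_le_pow_left₀ (norm_nonneg _) h 2
  -- second moment bound
  have hS2 : ∫ ω, ‖S ω‖ ^ 2 ∂μ ≤ C ^ 2 / k := by
    calc ∫ ω, ‖S ω‖ ^ 2 ∂μ = ∫ ω, ∑ j, (S ω j) ^ 2 ∂μ := by
          apply integral_congr_ae
          filter_upwards [] with ω
          exact hnorm_sq S ω
    _ = ∑ j, ∫ ω, (S ω j) ^ 2 ∂μ := integral_finset_sum _ (fun j _ => hSj2int j)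
    _ = ∑ j, variance (Zc j) μ := Finset.sum_congr rfl (fun j _ => hvarS j)
    _ ≤ ∑ j, (k : ℝ)⁻¹ ^ 2 * ∑ i, ∫ ω, (V i ω j) ^ 2 ∂μ :=
        Finset.sum_le_sum (fun j _ => hvarZ j)
    _ = (k : ℝ)⁻¹ ^ 2 * ∑ i, ∑ j, ∫ ω, (V i ω j) ^ 2 ∂μ := by
        rw [← Finset.mul_sum, Finset.sum_comm]
    _ = (k : ℝ)⁻¹ ^ 2 * ∑ i, ∫ ω, ‖V i ω‖ ^ 2 ∂μ := by
        congr 1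
        refine Finset.sum_congr rfl (fun i _ => ?_)
        rw [← integral_finset_sum _ (fun j _ => hVsqint i j)]
        apply integral_congr_ae
        filter_upwards [] with ω
        exact (hnorm_sq (V i) ω).symm
    _ ≤ (k : ℝ)⁻¹ ^ 2 * ∑ _i : Fin k, C ^ 2 := by
        apply mul_le_mul_of_nonneg_left _ (by positivity)
        refine Finset.sum_le_sum (fun i _ => ?_)
        calc ∫ ω, ‖V i ω‖ ^ 2 ∂μ ≤ ∫ _ω, C ^ 2 ∂μ := by
              apply integral_mono_ae (hVnormsqint i) (integrable_const _)
              filter_upwards [hC i] with ω h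
              exact pow_le_pow_left₀ (norm_nonneg _) h 2
        _ = C ^ 2 := by simp
    _ = C ^ 2 / k := by
        rw [Finset.sum_const]
        simp only [Finset.card_univ, Fintype.card_fin, nsmul_eq_mul]
        field_simp
  -- Jensen / Cauchy-Schwarz step
  have hSnormmem2 : MemLp (fun ω => ‖S ω‖) 2 μ := by
    refine MemLp.of_bound hSmeas.norm.aestronglyMeasurable (C + ‖β‖) ?_
    filter_upwards [hSbd] with ω h
    rwa [Real.norm_eq_abs, abs_of_nonneg (norm_nonneg _)]
  have hjensen : (∫ ω, ‖S ω‖ ∂μ) ^ 2 ≤ ∫ ω, ‖S ω‖ ^ 2 ∂μ := by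
    have h := variance_nonneg (fun ω => ‖S ω‖) μ
    rw [variance_eq_sub hSnormmem2] at h
    simpa using h
  have hI0 : 0 ≤ ∫ ω, ‖S ω‖ ∂μ := integral_nonneg (fun ω => norm_nonneg _)
  have hrhs0 : 0 ≤ C / Real.sqrt k := by positivity
  have hrsq : (C / Real.sqrt k) ^ 2 = C ^ 2 / k := by
    rw [div_pow, Real.sq_sqrt (le_of_lt hkpos)]
  nlinarith [hjensen, hS2, hI0, hrhs0, hrsq]


lemma integrable_avg_norm {Ω : Type*} [MeasurableSpace Ω] {μ : Measure Ω} [IsProbabilityMeasure μ]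
    {ι : Type*} [Fintype ι] {k : ℕ}
    (V : Fin k → Ω → EuclideanSpace ℝ ι) (hVmeas : ∀ i, Measurable (V i))
    {C : ℝ} (hC : ∀ i, ∀ᵐ ω ∂μ, ‖V i ω‖ ≤ C) (β : EuclideanSpace ℝ ι) :
    Integrable (fun ω => ‖(k : ℝ)⁻¹ • ∑ i, V i ω - β‖) μ := by
  refine memLp_one_iff_integrable.1 (MemLp.of_bound ?_ ((k : ℝ)⁻¹ * ((k : ℝ) * C) + ‖β‖) ?_)
  · exact ((((Finset.measurable_sum _ (fun i _ => hVmeas i)).const_smul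
      ((k : ℝ)⁻¹)).sub measurable_const).norm).aestronglyMeasurable
  · filter_upwards [ae_all_iff.2 hC] with ω hω
    rw [Real.norm_eq_abs, abs_of_nonneg (norm_nonneg _)]
    calc ‖(k : ℝ)⁻¹ • ∑ i, V i ω - β‖ ≤ ‖(k : ℝ)⁻¹ • ∑ i, V i ω‖ + ‖β‖ := norm_sub_le _ _
    _ ≤ (k : ℝ)⁻¹ * ((k : ℝ) * C) + ‖β‖ := by
        apply add_le_add_left
        rw [norm_smul, Real.norm_eq_abs, abs_of_nonneg (by positivity : (0:ℝ) ≤ (k:ℝ)⁻¹)]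
        apply mul_le_mul_of_nonneg_left _ (by positivity)
        calc ‖∑ i, V i ω‖ ≤ ∑ i, ‖V i ω‖ := norm_sum_le _ _
        _ ≤ ∑ _i : Fin k, C := Finset.sum_le_sum (fun i _ => hω i)
        _ = (k : ℝ) * C := by simp [mul_comm]

/-- `m`-stability of ridge regression: with i.i.d. data
`(X_1,Y_1), …, (X_{n+m},Y_{n+m})` and an independent test point `(X, Y)` (family `U`
indexed by `Fin (n+m+1)`, test point last) from a distribution `P` on `ℝ^d × ℝ` with
`‖X‖₂ ≤ B_X` and `|Y| ≤ B_Y` a.s., and with `θ̂_n ω` (resp. `θ̂_{n+m} ω`) any minimizer of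
the ridge objective `(1/n) ∑ᵢ (Yᵢ - Xᵢᵀθ)² + λ‖θ‖₂²` over the first `n` (resp. `n + m`)
data points, both the out-of-sample stability `E|X ᵀθ̂_n - X ᵀθ̂_{n+m}|` and the in-sample
stability `E|X₁ᵀθ̂_n - X₁ᵀθ̂_{n+m}|` are at most
`(2 B_X² B_Y / λ)(1 + B_X²/λ) · (m/(n+m)) · (1/√m + 1/√n)`. -/
theorem stmt8 {Ω : Type*} [MeasurableSpace Ω] (μ : Measure Ω) [IsProbabilityMeasure μ]
    {d : ℕ} (P : Measure (EuclideanSpace ℝ (Fin d) × ℝ)) [IsProbabilityMeasure P]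
    (n m : ℕ) (hn : 1 ≤ n) (hm : 1 ≤ m) (BX BY lam : ℝ) (hlam : 0 < lam)
    (U : Fin (n + m + 1) → Ω → EuclideanSpace ℝ (Fin d) × ℝ)
    (hmeas : ∀ i, Measurable (U i))
    (hindep : iIndepFun U μ)
    (hdist : ∀ i, μ.map (U i) = P)
    (hbound : ∀ᵐ p ∂P, ‖p.1‖ ≤ BX ∧ |p.2| ≤ BY)
    (thetaN thetaNM : Ω → EuclideanSpace ℝ (Fin d))
    (hminN : ∀ ω, ∀ θ : EuclideanSpace ℝ (Fin d),
      (n : ℝ)⁻¹ * ∑ i : Fin n,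
          ((U (i.castLE (by omega)) ω).2 - ⟪(U (i.castLE (by omega)) ω).1, thetaN ω⟫) ^ 2 +
        lam * ‖thetaN ω‖ ^ 2 ≤
      (n : ℝ)⁻¹ * ∑ i : Fin n,
          ((U (i.castLE (by omega)) ω).2 - ⟪(U (i.castLE (by omega)) ω).1, θ⟫) ^ 2 +
        lam * ‖θ‖ ^ 2)
    (hminNM : ∀ ω, ∀ θ : EuclideanSpace ℝ (Fin d),
      ((n + m : ℕ) : ℝ)⁻¹ * ∑ i : Fin (n + m),
          ((U (i.castLE (by omega)) ω).2 - ⟪(U (i.castLE (by omega)) ω).1, thetaNM ω⟫) ^ 2 +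
        lam * ‖thetaNM ω‖ ^ 2 ≤
      ((n + m : ℕ) : ℝ)⁻¹ * ∑ i : Fin (n + m),
          ((U (i.castLE (by omega)) ω).2 - ⟪(U (i.castLE (by omega)) ω).1, θ⟫) ^ 2 +
        lam * ‖θ‖ ^ 2) :
    max (∫ ω, |⟪(U (Fin.last (n + m)) ω).1, thetaN ω⟫ -
              ⟪(U (Fin.last (n + m)) ω).1, thetaNM ω⟫| ∂μ)
        (∫ ω, |⟪(U 0 ω).1, thetaN ω⟫ - ⟪(U 0 ω).1, thetaNM ω⟫| ∂μ) ≤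
      2 * BX ^ 2 * BY / lam * (1 + BX ^ 2 / lam) * (m / (n + m)) *
        (1 / Real.sqrt m + 1 / Real.sqrt n) := by
  classical
  have hle : n + m ≤ n + m + 1 := by omega
  -- nonnegativity of the bounds
  haveI : (MeasureTheory.ae P).NeBot := ae_neBot.2 (IsProbabilityMeasure.ne_zero P)
  obtain ⟨p₀, hp₀⟩ := hbound.exists
  have hBX : 0 ≤ BX := le_trans (norm_nonneg _) hp₀.1
  have hBY : 0 ≤ BY := le_trans (abs_nonneg _) hp₀.2
  -- almost sure bounds on the data
  have hmeasset : MeasurableSet {p : EuclideanSpace ℝ (Fin d) × ℝ | ‖p.1‖ ≤ BX ∧ |p.2| ≤ BY} := by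
    apply MeasurableSet.inter
    · exact measurableSet_le (measurable_fst.norm) measurable_const
    · exact measurableSet_le (measurable_snd.abs) measurable_const
  have haeU : ∀ i, ∀ᵐ ω ∂μ, ‖(U i ω).1‖ ≤ BX ∧ |(U i ω).2| ≤ BY := by
    intro i
    have h := hbound
    rw [← hdist i] at h
    exact (ae_map_iff (hmeas i).aemeasurable hmeasset).1 h
  have haeAll : ∀ᵐ ω ∂μ, ∀ i, ‖(U i ω).1‖ ≤ BX ∧ |(U i ω).2| ≤ BY := ae_all_iff.2 haeU
  -- the two pushforward functions
  set fb : EuclideanSpace ℝ (Fin d) × ℝ → EuclideanSpace ℝ (Fin d) := fun p => p.2 • p.1 with hfb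
  set fA : EuclideanSpace ℝ (Fin d) × ℝ → EuclideanSpace ℝ (Fin d × Fin d) :=
    fun p => tens p.1 p.1 with hfA
  have hfbmeas : Measurable fb := measurable_snd.smul measurable_fst
  have hfAmeas : Measurable fA := measurable_tens.comp measurable_fst
  have hfbbound : ∀ᵐ p ∂P, ‖fb p‖ ≤ BX * BY := by
    filter_upwards [hbound] with p hp
    rw [hfb]
    simp only [norm_smul, Real.norm_eq_abs]
    calc |p.2| * ‖p.1‖ ≤ BY * BX := mul_le_mul hp.2 hp.1 (norm_nonneg _) hBY
    _ = BX * BY := by ring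
  have hfAbound : ∀ᵐ p ∂P, ‖fA p‖ ≤ BX ^ 2 := by
    filter_upwards [hbound] with p hp
    rw [hfA]
    simp only [norm_tens]
    calc ‖p.1‖ * ‖p.1‖ ≤ BX * BX := mul_le_mul hp.1 hp.1 (norm_nonneg _) hBX
    _ = BX ^ 2 := by ring
  have hfbint : Integrable fb P :=
    memLp_one_iff_integrable.1 (MemLp.of_bound hfbmeas.aestronglyMeasurable _ hfbbound)
  have hfAint : Integrable fA P :=
    memLp_one_iff_integrable.1 (MemLp.of_bound hfAmeas.aestronglyMeasurable _ hfAbound)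
  set βb : EuclideanSpace ℝ (Fin d) := ∫ p, fb p ∂P with hβb
  set βA : EuclideanSpace ℝ (Fin d × Fin d) := ∫ p, fA p ∂P with hβA
  have hmb : ∀ i, ∫ ω, fb (U i ω) ∂μ = βb := by
    intro i
    have h := integral_map (μ := μ) (φ := U i) (hmeas i).aemeasurable
      (f := fb) (by rw [hdist i]; exact hfbmeas.aestronglyMeasurable)
    rw [hdist i] at h
    exact h.symm
  have hmA : ∀ i, ∫ ω, fA (U i ω) ∂μ = βA := by
    intro i
    have h := integral_map (μ := μ) (φ := U i) (hmeas i).aemeasurable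
      (f := fA) (by rw [hdist i]; exact hfAmeas.aestronglyMeasurable)
    rw [hdist i] at h
    exact h.symm
  -- index embeddings
  set eN : Fin n → Fin (n + m + 1) := fun i => (i.castAdd m).castLE hle with heN
  set eM : Fin m → Fin (n + m + 1) := fun i => (i.natAdd n).castLE hle with heM
  have heNinj : ∀ i j : Fin n, i ≠ j → eN i ≠ eN j := by
    intro i j hij h
    apply hij
    have := congrArg Fin.val h
    simp only [heN, Fin.coe_castLE, Fin.coe_castAdd] at this
    exact Fin.ext this
  have heMinj : ∀ i j : Fin m, i ≠ j → eM i ≠ eM j := by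
    intro i j hij h
    apply hij
    have := congrArg Fin.val h
    simp only [heM, Fin.coe_castLE, Fin.coe_natAdd] at this
    exact Fin.ext (by omega)
  -- the four empirical-average processes
  set VN : Fin n → Ω → EuclideanSpace ℝ (Fin d) := fun i ω => fb (U (eN i) ω) with hVN
  set VM : Fin m → Ω → EuclideanSpace ℝ (Fin d) := fun i ω => fb (U (eM i) ω) with hVM
  set WN : Fin n → Ω → EuclideanSpace ℝ (Fin d × Fin d) := fun i ω => fA (U (eN i) ω) with hWN
  set WM : Fin m → Ω → EuclideanSpace ℝ (Fin d × Fin d) := fun i ω => fA (U (eM i) ω) with hWM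
  have hVNbd : ∀ i, ∀ᵐ ω ∂μ, ‖VN i ω‖ ≤ BX * BY := by
    intro i
    filter_upwards [haeU (eN i)] with ω h
    rw [hVN]
    simp only [hfb, norm_smul, Real.norm_eq_abs]
    calc |(U (eN i) ω).2| * ‖(U (eN i) ω).1‖ ≤ BY * BX :=
      mul_le_mul h.2 h.1 (norm_nonneg _) hBY
    _ = BX * BY := by ring
  have hVMbd : ∀ i, ∀ᵐ ω ∂μ, ‖VM i ω‖ ≤ BX * BY := by
    intro i
    filter_upwards [haeU (eM i)] with ω h
    rw [hVM]
    simp only [hfb, norm_smul, Real.norm_eq_abs]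
    calc |(U (eM i) ω).2| * ‖(U (eM i) ω).1‖ ≤ BY * BX :=
      mul_le_mul h.2 h.1 (norm_nonneg _) hBY
    _ = BX * BY := by ring
  have hWNbd : ∀ i, ∀ᵐ ω ∂μ, ‖WN i ω‖ ≤ BX ^ 2 := by
    intro i
    filter_upwards [haeU (eN i)] with ω h
    rw [hWN]
    simp only [hfA, norm_tens]
    calc ‖(U (eN i) ω).1‖ * ‖(U (eN i) ω).1‖ ≤ BX * BX :=
      mul_le_mul h.1 h.1 (norm_nonneg _) hBX
    _ = BX ^ 2 := by ring
  have hWMbd : ∀ i, ∀ᵐ ω ∂μ, ‖WM i ω‖ ≤ BX ^ 2 := by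
    intro i
    filter_upwards [haeU (eM i)] with ω h
    rw [hWM]
    simp only [hfA, norm_tens]
    calc ‖(U (eM i) ω).1‖ * ‖(U (eM i) ω).1‖ ≤ BX * BX :=
      mul_le_mul h.1 h.1 (norm_nonneg _) hBX
    _ = BX ^ 2 := by ring
  -- concentration for the four averages
  have hcbN : ∫ ω, ‖(n : ℝ)⁻¹ • ∑ i, VN i ω - βb‖ ∂μ ≤ BX * BY / Real.sqrt n := by
    apply conc hn VN (fun i => hfbmeas.comp (hmeas _))
      (fun i j hij => (hindep.indepFun (heNinj i j hij)).comp hfbmeas hfbmeas)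
      hVNbd (fun i => hmb (eN i))
  have hcbM : ∫ ω, ‖(m : ℝ)⁻¹ • ∑ i, VM i ω - βb‖ ∂μ ≤ BX * BY / Real.sqrt m := by
    apply conc hm VM (fun i => hfbmeas.comp (hmeas _))
      (fun i j hij => (hindep.indepFun (heMinj i j hij)).comp hfbmeas hfbmeas)
      hVMbd (fun i => hmb (eM i))
  have hcAN : ∫ ω, ‖(n : ℝ)⁻¹ • ∑ i, WN i ω - βA‖ ∂μ ≤ BX ^ 2 / Real.sqrt n := by
    apply conc hn WN (fun i => hfAmeas.comp (hmeas _))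
      (fun i j hij => (hindep.indepFun (heNinj i j hij)).comp hfAmeas hfAmeas)
      hWNbd (fun i => hmA (eN i))
  have hcAM : ∫ ω, ‖(m : ℝ)⁻¹ • ∑ i, WM i ω - βA‖ ∂μ ≤ BX ^ 2 / Real.sqrt m := by
    apply conc hm WM (fun i => hfAmeas.comp (hmeas _))
      (fun i j hij => (hindep.indepFun (heMinj i j hij)).comp hfAmeas hfAmeas)
      hWMbd (fun i => hmA (eM i))
  -- the empirical difference vectors
  set bvec : Ω → EuclideanSpace ℝ (Fin d) :=
    fun ω => (n : ℝ)⁻¹ • ∑ i, VN i ω - (m : ℝ)⁻¹ • ∑ i, VM i ω with hbvec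
  set Avec : Ω → EuclideanSpace ℝ (Fin d × Fin d) :=
    fun ω => (n : ℝ)⁻¹ • ∑ i, WN i ω - (m : ℝ)⁻¹ • ∑ i, WM i ω with hAvec
  have hintcbN := integrable_avg_norm VN (fun i => hfbmeas.comp (hmeas _)) hVNbd βb
  have hintcbM := integrable_avg_norm VM (fun i => hfbmeas.comp (hmeas _)) hVMbd βb
  have hintcAN := integrable_avg_norm WN (fun i => hfAmeas.comp (hmeas _)) hWNbd βA
  have hintcAM := integrable_avg_norm WM (fun i => hfAmeas.comp (hmeas _)) hWMbd βA
  have hbvecmeas : Measurable fun ω => ‖bvec ω‖ :=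
    (((Finset.measurable_sum _ (fun (i : Fin n) _ => hfbmeas.comp (hmeas _))).const_smul
      ((n : ℝ)⁻¹)).sub ((Finset.measurable_sum _
        (fun (i : Fin m) _ => hfbmeas.comp (hmeas _))).const_smul ((m : ℝ)⁻¹))).norm
  have hAvecmeas : Measurable fun ω => ‖Avec ω‖ :=
    (((Finset.measurable_sum _ (fun (i : Fin n) _ => hfAmeas.comp (hmeas _))).const_smul
      ((n : ℝ)⁻¹)).sub ((Finset.measurable_sum _
        (fun (i : Fin m) _ => hfAmeas.comp (hmeas _))).const_smul ((m : ℝ)⁻¹))).norm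
  have hbvecptw : ∀ ω, ‖bvec ω‖ ≤
      ‖(n : ℝ)⁻¹ • ∑ i, VN i ω - βb‖ + ‖(m : ℝ)⁻¹ • ∑ i, VM i ω - βb‖ := by
    intro ω
    have : bvec ω = ((n : ℝ)⁻¹ • ∑ i, VN i ω - βb) - ((m : ℝ)⁻¹ • ∑ i, VM i ω - βb) := by
      rw [hbvec]; abel
    rw [this]
    exact norm_sub_le _ _
  have hAvecptw : ∀ ω, ‖Avec ω‖ ≤
      ‖(n : ℝ)⁻¹ • ∑ i, WN i ω - βA‖ + ‖(m : ℝ)⁻¹ • ∑ i, WM i ω - βA‖ := by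
    intro ω
    have : Avec ω = ((n : ℝ)⁻¹ • ∑ i, WN i ω - βA) - ((m : ℝ)⁻¹ • ∑ i, WM i ω - βA) := by
      rw [hAvec]; abel
    rw [this]
    exact norm_sub_le _ _
  have hbvecint : Integrable (fun ω => ‖bvec ω‖) μ := by
    refine Integrable.mono' (hintcbN.add hintcbM) hbvecmeas.aestronglyMeasurable ?_
    filter_upwards [] with ω
    rw [Real.norm_eq_abs, abs_of_nonneg (norm_nonneg _)]
    exact hbvecptw ω
  have hAvecint : Integrable (fun ω => ‖Avec ω‖) μ := by
    refine Integrable.mono' (hintcAN.add hintcAM) hAvecmeas.aestronglyMeasurable ?_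
    filter_upwards [] with ω
    rw [Real.norm_eq_abs, abs_of_nonneg (norm_nonneg _)]
    exact hAvecptw ω
  have haddb : Integrable (fun ω => ‖(n : ℝ)⁻¹ • ∑ i, VN i ω - βb‖ +
      ‖(m : ℝ)⁻¹ • ∑ i, VM i ω - βb‖) μ := hintcbN.add hintcbM
  have hIb : ∫ ω, ‖bvec ω‖ ∂μ ≤ BX * BY / Real.sqrt n + BX * BY / Real.sqrt m := by
    have h1 : ∫ ω, ‖bvec ω‖ ∂μ ≤
        ∫ ω, (‖(n : ℝ)⁻¹ • ∑ i, VN i ω - βb‖ + ‖(m : ℝ)⁻¹ • ∑ i, VM i ω - βb‖) ∂μ :=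
      integral_mono_ae hbvecint haddb (Filter.Eventually.of_forall hbvecptw)
    have h2 : ∫ ω, (‖(n : ℝ)⁻¹ • ∑ i, VN i ω - βb‖ + ‖(m : ℝ)⁻¹ • ∑ i, VM i ω - βb‖) ∂μ =
        (∫ ω, ‖(n : ℝ)⁻¹ • ∑ i, VN i ω - βb‖ ∂μ) +
        (∫ ω, ‖(m : ℝ)⁻¹ • ∑ i, VM i ω - βb‖ ∂μ) := integral_add hintcbN hintcbM
    linarith [h1, h2, hcbN, hcbM]
  have haddA : Integrable (fun ω => ‖(n : ℝ)⁻¹ • ∑ i, WN i ω - βA‖ +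
      ‖(m : ℝ)⁻¹ • ∑ i, WM i ω - βA‖) μ := hintcAN.add hintcAM
  have hIA : ∫ ω, ‖Avec ω‖ ∂μ ≤ BX ^ 2 / Real.sqrt n + BX ^ 2 / Real.sqrt m := by
    have h1 : ∫ ω, ‖Avec ω‖ ∂μ ≤
        ∫ ω, (‖(n : ℝ)⁻¹ • ∑ i, WN i ω - βA‖ + ‖(m : ℝ)⁻¹ • ∑ i, WM i ω - βA‖) ∂μ :=
      integral_mono_ae hAvecint haddA (Filter.Eventually.of_forall hAvecptw)
    have h2 : ∫ ω, (‖(n : ℝ)⁻¹ • ∑ i, WN i ω - βA‖ + ‖(m : ℝ)⁻¹ • ∑ i, WM i ω - βA‖) ∂μ =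
        (∫ ω, ‖(n : ℝ)⁻¹ • ∑ i, WN i ω - βA‖ ∂μ) +
        (∫ ω, ‖(m : ℝ)⁻¹ • ∑ i, WM i ω - βA‖ ∂μ) := integral_add hintcAN hintcAM
    linarith [h1, h2, hcAN, hcAM]
  -- the dominating function
  set G : Ω → ℝ := fun ω => BX / lam *
    ((m : ℝ) / ((n : ℝ) + m) * (2 * ‖bvec ω‖ + 2 * BX * BY / lam * ‖Avec ω‖)) with hG
  have hGint : Integrable G μ := by
    apply Integrable.const_mul
    apply Integrable.const_mul
    exact (hbvecint.const_mul 2).add (hAvecint.const_mul _)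
  have hGnonneg : ∀ ω, 0 ≤ G ω := by
    intro ω
    rw [hG]
    positivity
  -- pointwise a.e. domination of both integrands
  have hptw : ∀ᵐ ω ∂μ,
      |⟪(U (Fin.last (n + m)) ω).1, thetaN ω⟫ - ⟪(U (Fin.last (n + m)) ω).1, thetaNM ω⟫| ≤ G ω ∧
      |⟪(U 0 ω).1, thetaN ω⟫ - ⟪(U 0 ω).1, thetaNM ω⟫| ≤ G ω := by
    filter_upwards [haeAll] with ω hω
    have hdet := det_main (d := d) hn hm hlam hBX hBY
      (x := fun i : Fin (n + m) => (U (i.castLE hle) ω).1)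
      (y := fun i : Fin (n + m) => (U (i.castLE hle) ω).2)
      (fun i => (hω _).1) (fun i => (hω _).2)
      (θN := thetaN ω) (θNM := thetaNM ω)
      (fun θ => hminN ω θ) (fun θ => hminNM ω θ)
    have hdet' : lam * ‖thetaN ω - thetaNM ω‖ ≤ (m : ℝ) / ((n : ℝ) + m) *
        (2 * ‖bvec ω‖ + 2 * BX * BY / lam * ‖Avec ω‖) := hdet
    have hΔ : ‖thetaN ω - thetaNM ω‖ ≤ (m : ℝ) / ((n : ℝ) + m) *
        (2 * ‖bvec ω‖ + 2 * BX * BY / lam * ‖Avec ω‖) / lam :=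
      (le_div_iff₀ hlam).2 (by linarith)
    have hbnd : ∀ v : EuclideanSpace ℝ (Fin d), ‖v‖ ≤ BX →
        |⟪v, thetaN ω⟫ - ⟪v, thetaNM ω⟫| ≤ G ω := by
      intro v hv
      have h1 : ⟪v, thetaN ω⟫ - ⟪v, thetaNM ω⟫ = ⟪v, thetaN ω - thetaNM ω⟫ := by
        rw [inner_sub_right]
      rw [h1]
      calc |⟪v, thetaN ω - thetaNM ω⟫| ≤ ‖v‖ * ‖thetaN ω - thetaNM ω‖ :=
          abs_real_inner_le_norm _ _
      _ ≤ BX * ((m : ℝ) / ((n : ℝ) + m) *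
          (2 * ‖bvec ω‖ + 2 * BX * BY / lam * ‖Avec ω‖) / lam) := by
          apply mul_le_mul hv hΔ (norm_nonneg _) hBX
      _ = G ω := by rw [hG]; ring
    exact ⟨hbnd _ (hω (Fin.last (n + m))).1, hbnd _ (hω 0).1⟩
  -- bound each of the two integrals by ∫ G
  have hkey : ∀ f : Ω → ℝ, (∀ ω, 0 ≤ f ω) → (∀ᵐ ω ∂μ, f ω ≤ G ω) → ∫ ω, f ω ∂μ ≤ ∫ ω, G ω ∂μ := by
    intro f hf0 hfG
    by_cases hf : Integrable f μ
    · exact integral_mono_ae hf hGint hfG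
    · rw [integral_undef hf]
      exact integral_nonneg hGnonneg
  -- compute / bound ∫ G
  have hsn : (0:ℝ) < Real.sqrt n := Real.sqrt_pos.2 (by exact_mod_cast hn)
  have hsm : (0:ℝ) < Real.sqrt m := Real.sqrt_pos.2 (by exact_mod_cast hm)
  have hGval : ∫ ω, G ω ∂μ = BX / lam * ((m : ℝ) / ((n : ℝ) + m) *
      (2 * (∫ ω, ‖bvec ω‖ ∂μ) + 2 * BX * BY / lam * (∫ ω, ‖Avec ω‖ ∂μ))) := by
    rw [hG, MeasureTheory.integral_const_mul, MeasureTheory.integral_const_mul,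
      integral_add (hbvecint.const_mul 2) (hAvecint.const_mul _),
      MeasureTheory.integral_const_mul, MeasureTheory.integral_const_mul]
  have hGle : ∫ ω, G ω ∂μ ≤
      2 * BX ^ 2 * BY / lam * (1 + BX ^ 2 / lam) * ((m : ℝ) / ((n : ℝ) + m)) *
        (1 / Real.sqrt m + 1 / Real.sqrt n) := by
    rw [hGval]
    have hstep : BX / lam * ((m : ℝ) / ((n : ℝ) + m) *
        (2 * (∫ ω, ‖bvec ω‖ ∂μ) + 2 * BX * BY / lam * (∫ ω, ‖Avec ω‖ ∂μ))) ≤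
        BX / lam * ((m : ℝ) / ((n : ℝ) + m) *
        (2 * (BX * BY / Real.sqrt n + BX * BY / Real.sqrt m) +
          2 * BX * BY / lam * (BX ^ 2 / Real.sqrt n + BX ^ 2 / Real.sqrt m))) := by
      gcongr <;> first
        | exact integral_nonneg (fun ω => norm_nonneg _)
        | positivity
        | exact hIb
        | exact hIA
    calc _ ≤ _ := hstep
    _ = 2 * BX ^ 2 * BY / lam * (1 + BX ^ 2 / lam) * ((m : ℝ) / ((n : ℝ) + m)) *
        (1 / Real.sqrt m + 1 / Real.sqrt n) := by
      field_simp
      ring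
  have hfinal : ((m : ℕ) : ℝ) / (((n : ℕ) : ℝ) + ((m : ℕ) : ℝ)) = ((m:ℝ) / ((n:ℝ) + (m:ℝ))) := rfl
  apply max_le
  · calc ∫ ω, |⟪(U (Fin.last (n + m)) ω).1, thetaN ω⟫ -
          ⟪(U (Fin.last (n + m)) ω).1, thetaNM ω⟫| ∂μ ≤ ∫ ω, G ω ∂μ :=
      hkey _ (fun ω => abs_nonneg _) (by filter_upwards [hptw] with ω h using h.1)
    _ ≤ _ := hGle
  · calc ∫ ω, |⟪(U 0 ω).1, thetaN ω⟫ - ⟪(U 0 ω).1, thetaNM ω⟫| ∂μ ≤ ∫ ω, G ω ∂μ :=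
      hkey _ (fun ω => abs_nonneg _) (by filter_upwards [hptw] with ω h using h.2)
    _ ≤ _ := hGle
end
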